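/- arXiv:1711.06044 — 5 statements merged into one kernel-verified Lean document; each statement's English description precedes it below -/
import Mathlib

section
/- Let n, m be natural numbers and let k₁ ≥ k₂ ≥ … ≥ k_n ≥ 0 and l₁ ≥ l₂ ≥ … ≥ l_m ≥ 0 be weakly decreasing tuples of natural numbers. If ∏_{i=1}^n 5·(3/2)^{k_i−1}·(2^{2k_i−1}+1) = ∏_{j=1}^m 5·(3/2)^{l_j−1}·(2^{2l_j−1}+1) as rational numbers, then n = m and (k₁, …, k_n) = (l₁, …, l_m). -/
open Polynomial

/-- The invariant factor associated to a genus `k`: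
`5 * (3/2)^(k-1) * (2^(2k-1) + 1)`, with integer powers in `ℚ`. -/
noncomputable def genusFactor (k : ℕ) : ℚ :=
  5 * (3 / 2 : ℚ) ^ ((k : ℤ) - 1) * ((2 : ℚ) ^ (2 * (k : ℤ) - 1) + 1)

private def Nfac (k : ℕ) : ℕ := 5 * 3 ^ k * (4 ^ k + 2)

private lemma Nfac_pos (k : ℕ) : 0 < Nfac k := by
  unfold Nfac; positivity

private lemma Nfac_cast (x : ℕ) : ((Nfac x : ℕ) : ℚ) = genusFactor x * 3 * 2 ^ x := by
  unfold Nfac genusFactor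
  have h2 : (2:ℚ) ≠ 0 := by norm_num
  have h3 : (3:ℚ) ≠ 0 := by norm_num
  have e1 : ((3:ℚ)/2) ^ ((x : ℤ) - 1) = 3 ^ (x:ℤ) * (2 ^ (x:ℤ))⁻¹ * (2/3) := by
    rw [div_zpow, zpow_sub₀ h3, zpow_sub₀ h2, zpow_one, zpow_one]
    field_simp
  have e2 : (2:ℚ) ^ (2 * (x : ℤ) - 1) = 4 ^ (x:ℤ) * 2⁻¹ := by
    rw [zpow_sub₀ h2, zpow_one, zpow_mul]
    norm_num
    ring
  rw [e1, e2]
  have e3 : (3:ℚ) ^ ((x:ℕ) : ℤ) = 3 ^ (x:ℕ) := zpow_natCast 3 x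
  have e4 : (2:ℚ) ^ ((x:ℕ) : ℤ) = 2 ^ (x:ℕ) := zpow_natCast 2 x
  have e5 : (4:ℚ) ^ ((x:ℕ) : ℤ) = 4 ^ (x:ℕ) := zpow_natCast 4 x
  rw [e3, e4, e5]
  have h2x : (2:ℚ) ^ (x:ℕ) ≠ 0 := by positivity
  push_cast
  field_simp

private lemma genusFactor_pos (x : ℕ) : 0 < genusFactor x := by
  unfold genusFactor
  have h1 : (0:ℚ) < (3/2 : ℚ) ^ ((x:ℤ) - 1) := zpow_pos (by norm_num) _
  have h2 : (0:ℚ) < (2:ℚ) ^ (2 * (x:ℤ) - 1) := zpow_pos (by norm_num) _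
  positivity

private lemma prod_Nfac_cast (k : List ℕ) :
    (((k.map Nfac).prod : ℕ) : ℚ) = (k.map genusFactor).prod * 3 ^ k.length * 2 ^ k.sum := by
  induction k with
  | nil => simp
  | cons a k ih =>
    simp only [List.map_cons, List.prod_cons, List.length_cons, List.sum_cons]
    rw [Nat.cast_mul, ih, Nfac_cast, pow_add, pow_succ]
    ring

private lemma natEq {k l : List ℕ}
    (h : (k.map genusFactor).prod = (l.map genusFactor).prod) :
    (k.map Nfac).prod * 3 ^ l.length * 2 ^ l.sum
      = (l.map Nfac).prod * 3 ^ k.length * 2 ^ k.sum := by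
  have hq : (((k.map Nfac).prod * 3 ^ l.length * 2 ^ l.sum : ℕ) : ℚ)
      = (((l.map Nfac).prod * 3 ^ k.length * 2 ^ k.sum : ℕ) : ℚ) := by
    rw [Nat.cast_mul, Nat.cast_mul, Nat.cast_mul, Nat.cast_mul,
      Nat.cast_pow, Nat.cast_pow, Nat.cast_pow, Nat.cast_pow,
      prod_Nfac_cast, prod_Nfac_cast, h]
    push_cast
    ring
  exact_mod_cast hq

private lemma prod_Nfac_ne_zero (k : List ℕ) : (k.map Nfac).prod ≠ 0 := by
  induction k with
  | nil => simp
  | cons a k ih =>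
    simp only [List.map_cons, List.prod_cons]
    exact Nat.mul_ne_zero (Nfac_pos a).ne' ih

private lemma factorization_prod_Nfac (k : List ℕ) (p : ℕ) :
    ((k.map Nfac).prod).factorization p = (k.map (fun x => (Nfac x).factorization p)).sum := by
  induction k with
  | nil => simp
  | cons a k ih =>
    simp only [List.map_cons, List.prod_cons, List.sum_cons]
    rw [Nat.factorization_mul (Nfac_pos a).ne' (prod_Nfac_ne_zero k)]
    simp [ih]

private lemma fact_eq {p m a : ℕ} (hp : p.Prime) (hm : m ≠ 0) (h1 : p ^ a ∣ m)
    (h2 : ¬ p ^ (a+1) ∣ m) : m.factorization p = a := by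
  have l1 := (Nat.Prime.pow_dvd_iff_le_factorization hp hm).mp h1
  have l2 : ¬ (a + 1 ≤ m.factorization p) :=
    fun h => h2 ((Nat.Prime.pow_dvd_iff_le_factorization hp hm).mpr h)
  omega

private lemma not_five_dvd (x : ℕ) : ¬ (5:ℕ) ∣ 4 ^ x + 2 := by
  intro h
  have hz : ((4 ^ x + 2 : ℕ) : ZMod 5) = 0 := by
    rw [ZMod.natCast_eq_zero_iff]; exact h
  push_cast at hz
  have h4 : (4 : ZMod 5) = -1 := by decide
  rw [h4] at hz
  rcases Nat.even_or_odd x with he | ho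
  · rw [he.neg_one_pow] at hz; revert hz; decide
  · rw [ho.neg_one_pow] at hz; revert hz; decide

private lemma v5_Nfac (x : ℕ) : (Nfac x).factorization 5 = 1 := by
  apply fact_eq (by norm_num) (Nfac_pos x).ne'
  · unfold Nfac
    rw [pow_one]
    exact Dvd.dvd.mul_right (Dvd.dvd.mul_right dvd_rfl _) _
  · intro h
    unfold Nfac at h
    have h5 : (5:ℕ) ∣ 3 ^ x * (4 ^ x + 2) := by
      obtain ⟨w, hw⟩ : (25:ℕ) ∣ 5 * (3 ^ x * (4 ^ x + 2)) := by
        have h25 : (5:ℕ) ^ (1+1) = 25 := by norm_num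
        rw [← h25, ← mul_assoc]
        exact h
      exact ⟨w, by omega⟩
    rcases (Nat.Prime.dvd_mul (by norm_num)).mp h5 with h' | h'
    · have := Nat.Prime.dvd_of_dvd_pow (p := 5) (by norm_num) h'
      norm_num at this
    · exact not_five_dvd x h'

private lemma four_pow_eq (x : ℕ) (hx : 1 ≤ x) : (4:ℕ) ^ x + 2 = 2 * (2 ^ (2 * x - 1) + 1) := by
  have h1 : (4:ℕ) ^ x = 2 ^ (2 * x) := by
    rw [show (4:ℕ) = 2 ^ 2 by norm_num, ← pow_mul]
  have h2 : (2:ℕ) ^ (2 * x) = 2 * 2 ^ (2 * x - 1) := by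
    rw [← pow_succ']
    congr 1
    omega
  rw [h1, h2]
  ring

private lemma v2_Nfac (x : ℕ) : (Nfac x).factorization 2 = if x = 0 then 0 else 1 := by
  rcases Nat.eq_zero_or_pos x with rfl | hx
  · simp only [if_pos rfl]
    apply Nat.factorization_eq_zero_of_not_dvd
    norm_num [Nfac]
  · rw [if_neg (by omega)]
    apply fact_eq (by norm_num) (Nfac_pos x).ne'
    · unfold Nfac
      rw [pow_one, four_pow_eq x hx]
      exact Dvd.dvd.mul_left (Dvd.intro _ rfl) _
    · intro h
      have hz : ((Nfac x : ℕ) : ZMod 4) = 0 := by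
        rw [ZMod.natCast_eq_zero_iff]
        exact_mod_cast h
    -- Nfac x mod 4 = 2 * 3^x ≠ 0
      unfold Nfac at hz
      push_cast at hz
      have h4 : (4 : ZMod 4) = 0 := by decide
      rw [h4, zero_pow (by omega)] at hz
      have h3 : (3 : ZMod 4) = -1 := by decide
      rw [h3] at hz
      rcases Nat.even_or_odd x with he | ho
      · rw [he.neg_one_pow] at hz; revert hz; decide
      · rw [ho.neg_one_pow] at hz; revert hz; decide

private lemma v3_Nfac0 : (Nfac 0).factorization 3 = 1 := by
  apply fact_eq (by norm_num) (Nfac_pos 0).ne' <;> decide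

private lemma v3_Nfac1 : (Nfac 1).factorization 3 = 2 := by
  apply fact_eq (by norm_num) (Nfac_pos 1).ne' <;> decide

private lemma fact_expr (k : List ℕ) (L S p : ℕ) :
    (((k.map Nfac).prod) * 3 ^ L * 2 ^ S).factorization p
    = (k.map fun x => (Nfac x).factorization p).sum
      + L * (Nat.factorization 3) p + S * (Nat.factorization 2) p := by
  rw [Nat.factorization_mul (mul_ne_zero (prod_Nfac_ne_zero k) (pow_ne_zero _ (by norm_num)))
    (pow_ne_zero _ (by norm_num)),
    Nat.factorization_mul (prod_Nfac_ne_zero k) (pow_ne_zero _ (by norm_num)),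
    Nat.factorization_pow, Nat.factorization_pow]
  simp only [Finsupp.coe_add, Finsupp.coe_smul, Pi.add_apply, Pi.smul_apply, smul_eq_mul]
  rw [factorization_prod_Nfac]

private lemma fact_prime_apply (q p : ℕ) (hq : q.Prime) :
    (Nat.factorization q) p = if q = p then 1 else 0 := by
  rw [hq.factorization]
  simp [Finsupp.single_apply]

private lemma sum_v5 (m : List ℕ) :
    (m.map fun x => (Nfac x).factorization 5).sum = m.length := by
  induction m with
  | nil => simp
  | cons a m ih => simp [v5_Nfac, ih]; omega

private lemma length_eq {k l : List ℕ}
    (h : (k.map genusFactor).prod = (l.map genusFactor).prod) : k.length = l.length := by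
  have hfac := congrArg (fun m => m.factorization 5) (natEq h)
  rw [fact_expr, fact_expr, sum_v5, sum_v5,
    fact_prime_apply 3 5 (by norm_num), fact_prime_apply 2 5 (by norm_num)] at hfac
  simp only [if_neg (by norm_num : ¬ (3:ℕ) = 5), if_neg (by norm_num : ¬ (2:ℕ) = 5)] at hfac
  omega

private lemma mem_le_sum {a : ℕ} {k : List ℕ} (h : a ∈ k) : a ≤ k.sum := by
  induction k with
  | nil => simp at h
  | cons b k ih =>
    rcases List.mem_cons.mp h with rfl | h'
    · simp
    · have := ih h'
      simp only [List.sum_cons]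
      omega

private lemma sum_ite_count (K e : ℕ) (f : ℕ → ℕ) :
    ∀ k : List ℕ, (∀ x ∈ k, f x = if x = K then e else 0) →
      (k.map f).sum = e * k.count K := by
  intro k
  induction k with
  | nil => simp
  | cons a k ih =>
    intro hfa
    simp only [List.map_cons, List.sum_cons, List.count_cons]
    rw [ih (fun x hx => hfa x (List.mem_cons_of_mem a hx)),
      hfa a List.mem_cons_self]
    split_ifs with h1 h2 h3
    · ring
    · exact absurd (beq_iff_eq.mpr h1) h2
    · exact absurd (beq_iff_eq.mp h3) h1
    · ring

private lemma sum_v3 (k : List ℕ) (hk : ∀ x ∈ k, x ≤ 1) :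
    (k.map fun x => (Nfac x).factorization 3).sum = k.sum + k.length := by
  induction k with
  | nil => simp
  | cons a k ih =>
    have ha := hk a List.mem_cons_self
    have hval : (Nfac a).factorization 3 = a + 1 := by
      rcases Nat.eq_zero_or_pos a with rfl | h
      · exact v3_Nfac0
      · have : a = 1 := by omega
        rw [this]; exact v3_Nfac1
    simp only [List.map_cons, List.sum_cons, List.length_cons]
    rw [ih (fun x hx => hk x (List.mem_cons_of_mem a hx)), hval]
    omega

private lemma sum_v2 (k : List ℕ) (hk : ∀ x ∈ k, x ≤ 2) :
    k.sum = (k.map fun x => (Nfac x).factorization 2).sum + k.count 2 := by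
  induction k with
  | nil => simp
  | cons a k ih =>
    have ha := hk a List.mem_cons_self
    simp only [List.map_cons, List.sum_cons, List.count_cons]
    rw [ih (fun x hx => hk x (List.mem_cons_of_mem a hx)), v2_Nfac]
    split_ifs with h1 h2 h3 <;> simp_all <;> omega


private lemma evalCast (R : Type*) [CommRing R] (m : ℕ) (x : ℤ) :
    (cyclotomic m R).eval (x : R) = (((cyclotomic m ℤ).eval x : ℤ) : R) := by
  rw [← map_cyclotomic_int m R, eval_intCast_map, eq_intCast]; norm_num

-- the geom-sum divisibility: for q prime dividing n, Φ_n(2) ∣ ∑_{i<q} (2^(n/q))^i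
private lemma phi_dvd_geom {n q : ℕ} (hn : 0 < n) (hq : 2 ≤ q) (hqn : q ∣ n) :
    (cyclotomic n ℤ).eval 2 ∣ ∑ i ∈ Finset.range q, ((2:ℤ) ^ (n / q)) ^ i := by
  have hd : n / q ∈ n.properDivisors := by
    rw [Nat.mem_properDivisors]
    exact ⟨Nat.div_dvd_of_dvd hqn, Nat.div_lt_self hn (by omega)⟩
  have h := X_pow_sub_one_mul_cyclotomic_dvd_X_pow_sub_one_of_dvd ℤ hd
  have h2 := Polynomial.eval_dvd (x := (2:ℤ)) h
  simp only [eval_mul, eval_sub, eval_pow, eval_X, eval_one] at h2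
  have hpow : (2:ℤ) ^ n = ((2:ℤ) ^ (n / q)) ^ q := by
    rw [← pow_mul, Nat.div_mul_cancel hqn]
  rw [hpow, ← geom_sum_mul ((2:ℤ)^(n/q)) q] at h2
  have hne : ((2:ℤ) ^ (n / q) - 1) ≠ 0 := by
    have : (2:ℤ)^(n/q) ≠ 1 := by
      have : 0 < n / q := Nat.div_pos (Nat.le_of_dvd hn hqn) (by omega)
      have h3 : (2:ℤ)^(n/q) ≥ 2^1 := by
        apply pow_le_pow_right₀ (by norm_num) (by omega)
      omega
    omega
  rw [mul_comm ((2:ℤ)^(n/q) - 1) _] at h2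
  exact (mul_dvd_mul_iff_right hne).mp h2

private lemma two_pow_gt (p : ℕ) (hp : 2 ≤ p) : p + 1 < 2 ^ p := by
  induction p with
  | zero => omega
  | succ n ih =>
    rcases Nat.lt_or_ge n 2 with h | h
    · interval_cases n
      · omega
      · norm_num
    · have := ih h; have h2 : (2:ℕ)^(n+1) = 2 * 2^n := by ring
      omega

private lemma two_pow_gt3 (p : ℕ) (hp : 5 ≤ p) : 3 * p + 1 < 2 ^ p := by
  induction p with
  | zero => omega
  | succ n ih =>
    rcases Nat.lt_or_ge n 5 with h | h
    · interval_cases n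
      · omega
      · omega
      · omega
      · omega
      · norm_num
    · have := ih h
      have h3 : (2:ℕ)^(n+1) = 2 * 2^n := by ring
      omega


private lemma prime_dvd_q {n q r : ℕ} (hn : 0 < n) (hq : q.Prime) (hqn : q ∣ n)
    (hr : r.Prime) (hrPhi : (r:ℤ) ∣ (cyclotomic n ℤ).eval 2)
    (hT : orderOf (2 : ZMod r) ∣ n / q) : r = q := by
  haveI := Fact.mk hr
  have hgd := phi_dvd_geom hn hq.two_le hqn
  have hrd : (r:ℤ) ∣ ∑ i ∈ Finset.range q, ((2:ℤ) ^ (n / q)) ^ i := hrPhi.trans hgd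
  have hcast : ((∑ i ∈ Finset.range q, ((2:ℤ) ^ (n / q)) ^ i : ℤ) : ZMod r) = 0 := by
    rw [ZMod.intCast_zmod_eq_zero_iff_dvd]; exact_mod_cast hrd
  push_cast at hcast
  rw [orderOf_dvd_iff_pow_eq_one.mp hT] at hcast
  simp only [one_pow, Finset.sum_const, Finset.card_range, nsmul_eq_mul, mul_one] at hcast
  have : r ∣ q := by rwa [← ZMod.natCast_eq_zero_iff]
  exact (Nat.prime_dvd_prime_iff_eq hr hq).mp this

private lemma divTrick {n T q : ℕ} (hn : 0 < n) (hq : 0 < q) (hTn : T ∣ n) (h : q ∣ n / T) :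
    T ∣ n / q := by
  have hT : 0 < T := Nat.pos_of_dvd_of_pos hTn hn
  obtain ⟨u, hu⟩ := hTn
  obtain ⟨v, hv⟩ := h
  rw [hu, Nat.mul_div_cancel_left u hT] at hv
  have h2 : n = q * (T * v) := by rw [hu, hv]; ring
  rw [h2, Nat.mul_div_cancel_left _ hq]
  exact Dvd.intro v rfl

/-- Bang-type theorem: for odd `t ≥ 5` there is a prime `p` dividing `2^t+1`
such that the order of 2 mod p is exactly 2t. -/
private lemma bang (t : ℕ) (ht : Odd t) (h5 : 5 ≤ t) :
    ∃ p : ℕ, p.Prime ∧ p ∣ 2 ^ t + 1 ∧ ∀ m : ℕ, 0 < m → p ∣ 2 ^ m - 1 → 2 * t ∣ m := by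
  set n := 2 * t with hn
  have hn10 : 10 ≤ n := by omega
  have hnpos : 0 < n := by omega
  set Φ : ℤ := (cyclotomic n ℤ).eval 2 with hΦ
  -- Φ > 1
  have hΦ1 : 1 < Φ := by
    have hreal := sub_one_pow_totient_lt_cyclotomic_eval (n := n) (q := (2:ℝ)) (by omega) (by norm_num)
    have hcast := evalCast ℝ n 2
    norm_num at hreal hcast
    rw [hcast] at hreal
    exact_mod_cast hreal
  -- Φ ∣ 2^n - 1
  have hΦdvd : Φ ∣ 2 ^ n - 1 := by
    have := Polynomial.eval_dvd (x := (2:ℤ)) (cyclotomic.dvd_X_pow_sub_one n ℤ)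
    simpa using this
  -- Φ as a natural number
  set c : ℕ := Φ.toNat with hc
  have hcΦ : (c : ℤ) = Φ := Int.toNat_of_nonneg (by omega)
  have hc1 : 1 < c := by omega
  have hcdvd : c ∣ 2 ^ n - 1 := by
    have h1 : (1:ℕ) ≤ 2 ^ n := Nat.one_le_two_pow
    have : (c : ℤ) ∣ ((2 ^ n - 1 : ℕ) : ℤ) := by
      rw [hcΦ]; push_cast [h1]; exact hΦdvd
    exact_mod_cast this
  by_cases H : ∀ q : ℕ, q.Prime → q ∣ c → q ∣ n
  · -- degenerate case: contradiction
    exfalso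
    have hΦc : ∀ r : ℕ, r ∣ c → (r:ℤ) ∣ Φ := fun r hr => hcΦ ▸ Int.natCast_dvd_natCast.mpr hr
    have hodd : ∀ r : ℕ, r.Prime → r ∣ c → r ≠ 2 := by
      rintro r hr hrc rfl
      have h2d : (2:ℕ) ∣ 2 ^ n - 1 := hrc.trans hcdvd
      have h1 : (1:ℕ) ≤ 2 ^ n := Nat.one_le_two_pow
      have h2p : (2:ℕ) ∣ 2 ^ n := dvd_pow_self 2 (by omega)
      omega
    have core : ∀ r, r.Prime → r ∣ c → ∀ q', q'.Prime → q' ∣ n → q' ≠ r → q' < r := by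
      intro r hr hrc q' hq' hq'n hne
      haveI := Fact.mk hr
      have hr2 : r ≠ 2 := hodd r hr hrc
      have h20 : (2 : ZMod r) ≠ 0 := by
        rw [show (2:ZMod r) = ((2:ℕ):ZMod r) by norm_num, Ne, ZMod.natCast_eq_zero_iff]
        intro hdvd
        exact hr2 ((Nat.prime_dvd_prime_iff_eq hr Nat.prime_two).mp hdvd)
      have hrn1 : r ∣ 2 ^ n - 1 := hrc.trans hcdvd
      have h2n1 : (2 : ZMod r) ^ n = 1 := by
        have h1 : (1:ℕ) ≤ 2 ^ n := Nat.one_le_two_pow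
        have hz : ((2 ^ n - 1 : ℕ) : ZMod r) = 0 := by
          rw [ZMod.natCast_eq_zero_iff]; exact hrn1
        push_cast [h1] at hz
        linear_combination hz
      have hTn : orderOf (2 : ZMod r) ∣ n := orderOf_dvd_of_pow_eq_one h2n1
      have hTr : orderOf (2 : ZMod r) ∣ r - 1 := ZMod.orderOf_dvd_card_sub_one h20
      have hsplit : q' ∣ orderOf (2 : ZMod r) * (n / orderOf (2 : ZMod r)) := by
        rw [Nat.mul_div_cancel' hTn]; exact hq'n
      rcases (Nat.Prime.dvd_mul hq').mp hsplit with hcase | hcase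
      · have hq'r : q' ∣ r - 1 := hcase.trans hTr
        have := Nat.le_of_dvd (by have := hr.two_le; omega) hq'r
        omega
      · exact absurd (prime_dvd_q hnpos hq' hq'n hr (hΦc r hrc)
          (divTrick hnpos hq'.pos hTn hcase)).symm hne
    set p := c.minFac with hpdef
    have hp : p.Prime := Nat.minFac_prime (by omega)
    have hpc : p ∣ c := Nat.minFac_dvd c
    have hpn : p ∣ n := H p hp hpc
    haveI := Fact.mk hp
    have hallp : ∀ q, q.Prime → q ∣ c → q = p := by
      intro q hq hqc
      by_contra hne
      have h1 := core p hp hpc q hq (H q hq hqc) hne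
      have h2 := core q hq hqc p hp hpn (Ne.symm hne)
      omega
    have hp2 : p ≠ 2 := hodd p hp hpc
    have h20 : (2 : ZMod p) ≠ 0 := by
      rw [show (2:ZMod p) = ((2:ℕ):ZMod p) by norm_num, Ne, ZMod.natCast_eq_zero_iff]
      intro hdvd
      exact hp2 ((Nat.prime_dvd_prime_iff_eq hp Nat.prime_two).mp hdvd)
    have h2n1 : (2 : ZMod p) ^ n = 1 := by
      have h1 : (1:ℕ) ≤ 2 ^ n := Nat.one_le_two_pow
      have hz : ((2 ^ n - 1 : ℕ) : ZMod p) = 0 := by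
        rw [ZMod.natCast_eq_zero_iff]; exact hpc.trans hcdvd
      push_cast [h1] at hz
      linear_combination hz
    set T := orderOf (2 : ZMod p) with hTdef
    have hTn : T ∣ n := orderOf_dvd_of_pow_eq_one h2n1
    have hTp1 : T ∣ p - 1 := ZMod.orderOf_dvd_card_sub_one h20
    have hTpos : 0 < T := by
      rcases Nat.eq_zero_or_pos T with h | h
      · rw [h] at hTn; omega
      · exact h
    have hT1 : T ≠ 1 := by
      intro h1
      have h2eq : (2 : ZMod p) = 1 := orderOf_eq_one_iff.mp h1
      have : ((1:ℕ) : ZMod p) = 0 := by push_cast; linear_combination h2eq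
      rw [ZMod.natCast_eq_zero_iff] at this
      exact hp.one_lt.ne' (Nat.dvd_one.mp this)
    have hpT : ¬ p ∣ T := by
      intro h
      have h1 := Nat.le_of_dvd (by have := hp.two_le; omega) (h.trans hTp1)
      have := hp.two_le
      omega
    have hun : n = T * (n / T) := (Nat.mul_div_cancel' hTn).symm
    have hupos : 0 < n / T := Nat.div_pos (Nat.le_of_dvd hnpos hTn) hTpos
    have hpu : p ∣ n / T := by
      rcases (Nat.Prime.dvd_mul hp).mp (hun ▸ hpn) with h | h
      · exact absurd h hpT
      · exact h
    have hudvd : n / T ∣ n := Nat.div_dvd_of_dvd hTn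
    have hk := Nat.eq_prime_pow_of_unique_prime_dvd hupos.ne'
      (fun {q} hq hqu => (prime_dvd_q hnpos hq (hqu.trans hudvd) hp (hΦc p hpc)
        (divTrick hnpos hq.pos hTn hqu)).symm)
    set k := (n / T).primeFactorsList.length with hkdef
    have hk1 : 1 ≤ k := by
      by_contra h
      have hk0 : k = 0 := by omega
      rw [hk0, pow_zero] at hk
      rw [hk] at hpu
      exact hp.one_lt.ne' (Nat.dvd_one.mp hpu)
    have hTnp : T ∣ n / p := divTrick hnpos hp.pos hTn hpu
    -- p^2 does not divide c
    have hS2 : ¬ (p ^ 2 : ℕ) ∣ c := by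
      intro hp2c
      haveI : NeZero (p ^ 2) := ⟨pow_ne_zero _ hp.pos.ne'⟩
      have hgd := phi_dvd_geom hnpos hp.two_le hpn
      have hx0 : (2 : ZMod p) ^ (n / p) = 1 := orderOf_dvd_iff_pow_eq_one.mp hTnp
      have hx1 : (p:ℤ) ∣ 2 ^ (n / p) - 1 := by
        have hz : (((2:ℤ) ^ (n / p) - 1 : ℤ) : ZMod p) = 0 := by
          push_cast
          linear_combination hx0
        rwa [ZMod.intCast_zmod_eq_zero_iff_dvd] at hz
      obtain ⟨d, hd⟩ := hx1
      have hdvd2 : (p:ℤ) ^ 2 ∣ ∑ i ∈ Finset.range p, ((2:ℤ) ^ (n / p)) ^ i := by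
        refine dvd_trans ?_ hgd
        have h1 : ((p ^ 2 : ℕ) : ℤ) ∣ (c : ℤ) := Int.natCast_dvd_natCast.mpr hp2c
        rw [hcΦ] at h1
        exact_mod_cast h1
      have hpR : ((p : ZMod (p^2))) ^ 2 = 0 := by
        have h1 : ((p ^ 2 : ℕ) : ZMod (p ^ 2)) = 0 := ZMod.natCast_self _
        push_cast at h1
        exact h1
      set a : ZMod (p ^ 2) := (p : ZMod (p ^ 2)) * ((d : ℤ) : ZMod (p ^ 2)) with hadef
      have ha2 : a * a = 0 := by
        have h1 : a * a = (p : ZMod (p^2)) ^ 2 * ((d:ℤ) : ZMod (p^2)) ^ 2 := by rw [hadef]; ring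
        rw [h1, hpR, zero_mul]
      have hxa : ((2 : ZMod (p ^ 2))) ^ (n / p) = 1 + a := by
        have h1 : ((2:ZMod (p^2))) ^ (n / p) - 1 = (p : ZMod (p^2)) * ((d:ℤ) : ZMod (p^2)) := by
          exact_mod_cast congrArg (Int.cast : ℤ → ZMod (p ^ 2)) hd
        rw [hadef]
        linear_combination h1
      have hpow : ∀ i : ℕ, (1 + a) ^ i = 1 + (i : ZMod (p ^ 2)) * a := by
        intro i
        induction i with
        | zero => simp
        | succ j ih =>
          have hps : (1 + a) ^ (j + 1) = (1 + a) ^ j * (1 + a) := pow_succ _ _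
          rw [hps, ih]
          push_cast
          linear_combination (j : ZMod (p^2)) * ha2
      have hgauss : (∑ i ∈ Finset.range p, i) * p = p ^ 2 * ((p - 1) / 2) := by
        rw [Finset.sum_range_id]
        have hpodd : p % 2 = 1 := (Nat.Prime.mod_two_eq_one_iff_ne_two hp).mpr hp2
        have h1 : p - 1 = 2 * ((p - 1) / 2) := by omega
        calc p * (p - 1) / 2 * p = p * (2 * ((p-1)/2)) / 2 * p := by rw [← h1]
          _ = p * ((p-1)/2) * p := by rw [Nat.mul_div_assoc _ (by omega : 2 ∣ 2 * ((p-1)/2)), Nat.mul_div_cancel_left _ (by norm_num)]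
          _ = p ^ 2 * ((p - 1) / 2) := by ring
      have hsum : ((∑ i ∈ Finset.range p, ((2:ℤ) ^ (n / p)) ^ i : ℤ) : ZMod (p ^ 2)) = (p : ZMod (p ^ 2)) := by
        push_cast
        rw [hxa]
        rw [Finset.sum_congr rfl (fun i _ => hpow i), Finset.sum_add_distrib,
          Finset.sum_const, Finset.card_range, ← Finset.sum_mul]
        have hs1 : (∑ i ∈ Finset.range p, (i : ZMod (p ^ 2))) = ((∑ i ∈ Finset.range p, i : ℕ) : ZMod (p ^ 2)) := by
          push_cast
          rfl
        rw [hs1, hadef, ← mul_assoc]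
        have hs2 : ((∑ i ∈ Finset.range p, i : ℕ) : ZMod (p ^ 2)) * (p : ZMod (p ^ 2)) = (((∑ i ∈ Finset.range p, i) * p : ℕ) : ZMod (p ^ 2)) := by
          push_cast
          ring
        rw [hs2, hgauss]
        have hs3 : ((p ^ 2 * ((p - 1) / 2) : ℕ) : ZMod (p ^ 2)) = 0 := by
          rw [Nat.cast_mul, ZMod.natCast_self, zero_mul]
        rw [hs3, zero_mul, add_zero]
        simp
      have hfin : ((p : ℕ) : ZMod (p ^ 2)) = 0 := by
        rw [← hsum, ZMod.intCast_zmod_eq_zero_iff_dvd]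
        exact_mod_cast hdvd2
      rw [ZMod.natCast_eq_zero_iff] at hfin
      have h1 := Nat.le_of_dvd hp.pos hfin
      nlinarith [hp.two_le]
    -- c = p
    have hcp : c = p := by
      have hck := Nat.eq_prime_pow_of_unique_prime_dvd (by omega : c ≠ 0)
        (fun {q} hq hqc => hallp q hq hqc)
      set kc := c.primeFactorsList.length
      rcases Nat.lt_or_ge kc 2 with h | h
      · interval_cases kc
        · rw [pow_zero] at hck; omega
        · rw [pow_one] at hck; exact hck
      · exfalso
        apply hS2
        rw [hck]
        exact pow_dvd_pow p h
    have hΦp : Φ = (p : ℤ) := by rw [← hcΦ, hcp]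
    -- size contradiction
    rcases Nat.lt_or_ge k 2 with hk2 | hk2
    · -- k = 1 : n = T * p with p ∤ T
      have hk1' : k = 1 := by omega
      have hun' : n = T * p := by rw [hun, hk, hk1', pow_one]
      have hexp := cyclotomic_expand_eq_cyclotomic_mul hp hpT ℤ
      have heval := congrArg (Polynomial.eval (2:ℤ)) hexp
      rw [expand_eval, eval_mul, ← hun', ← hΦ, hΦp] at heval
      by_cases hT2 : T = 2
      · rw [hT2] at heval
        simp only [cyclotomic_two, eval_add, eval_X, eval_one] at heval
        -- heval : 2^p + 1 = p * (2 + 1)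
        have hp5 : 5 ≤ p := by
          by_contra h
          have h2 := hp.two_le
          have : p = 3 ∨ p = 4 := by omega
          rcases this with heq | heq
          · rw [heq, hT2] at hun'; omega
          · rw [heq] at hp; norm_num at hp
        have hnat : (2:ℕ) ^ p + 1 = p * 3 := by exact_mod_cast heval
        have := two_pow_gt3 p hp5
        omega
      · have hT3 : 3 ≤ T := by omega
        have hp5 : 5 ≤ p := by
          by_contra h
          have h2 := hp.two_le
          have : p = 3 ∨ p = 4 := by omega
          rcases this with heq | heq
          · rw [heq] at hTp1
            have := Nat.le_of_dvd (by norm_num) hTp1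
            omega
          · rw [heq] at hp; norm_num at hp
        have hq1 : (1:ℝ) < (2:ℝ) ^ p := by
          apply one_lt_pow₀ (by norm_num) (by omega)
        have hb1 := sub_one_pow_totient_lt_cyclotomic_eval (n := T) (q := (2:ℝ)^p) (by omega) hq1
        have hb2 := cyclotomic_eval_lt_add_one_pow_totient (n := T) (q := (2:ℝ)) (by omega) (by norm_num)
        have hb3 : (0:ℝ) < (cyclotomic T ℝ).eval 2 := cyclotomic_pos' T (by norm_num)
        have hevalR : (cyclotomic T ℝ).eval ((2:ℝ) ^ p) = (p : ℝ) * (cyclotomic T ℝ).eval 2 := by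
          have e1 : (cyclotomic T ℝ).eval ((2:ℝ) ^ p) = (((cyclotomic T ℤ).eval ((2:ℤ)^p) : ℤ) : ℝ) := by
            have := evalCast ℝ T ((2:ℤ)^p)
            push_cast at this ⊢
            rw [← this]
          have e2 : (cyclotomic T ℝ).eval (2:ℝ) = (((cyclotomic T ℤ).eval (2:ℤ) : ℤ) : ℝ) := by
            have := evalCast ℝ T 2
            push_cast at this ⊢
            rw [← this]
          rw [e1, e2, heval]
          push_cast
          ring
        set f2 := (cyclotomic T ℝ).eval 2 with hf2
        set φt := T.totient with hφt
        have hφ1 : 0 < φt := Nat.totient_pos.mpr (by omega)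
        have h3p : (3:ℝ) * p < (2:ℝ) ^ p - 1 := by
          have := two_pow_gt3 p hp5
          have hcast : ((2:ℕ)^p : ℝ) = (2:ℝ)^p := by push_cast; ring
          have : (3 * p + 1 : ℝ) < (2:ℝ)^p := by exact_mod_cast two_pow_gt3 p hp5
          linarith
        have hc1 : ((3:ℝ) * p) ^ φt ≤ ((2:ℝ) ^ p - 1) ^ φt :=
          pow_le_pow_left₀ (by positivity) h3p.le φt
        have hc3 : (p:ℝ) ≤ (p:ℝ) ^ φt :=
          le_self_pow₀ (by exact_mod_cast hp.one_lt.le) (by omega)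
        have hb2' : f2 < (3:ℝ) ^ φt := by
          have : ((2:ℝ) + 1) = 3 := by norm_num
          rw [this] at hb2
          exact hb2
        have hfinal : (p:ℝ) * f2 < (p:ℝ) * f2 := by
          calc (p:ℝ) * f2 < (p:ℝ) * 3 ^ φt := by
                apply mul_lt_mul_of_pos_left hb2' (by exact_mod_cast hp.pos)
            _ ≤ (p:ℝ) ^ φt * 3 ^ φt := by
                apply mul_le_mul_of_nonneg_right hc3 (by positivity)
            _ = ((3:ℝ) * p) ^ φt := by rw [mul_pow]; ring
            _ ≤ ((2:ℝ) ^ p - 1) ^ φt := hc1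
            _ < (cyclotomic T ℝ).eval ((2:ℝ) ^ p) := hb1
            _ = (p:ℝ) * f2 := hevalR
        exact lt_irrefl _ hfinal
    · -- k ≥ 2 : p ∣ n / p
      have hnp1 : n / p = T * p ^ (k - 1) := by
        have h1 : n = (T * p ^ (k-1)) * p := by
          rw [hun, hk]
          have : p ^ k = p ^ (k-1) * p := by
            rw [← pow_succ]
            congr 1
            omega
          rw [this]; ring
        rw [h1, Nat.mul_div_cancel _ hp.pos]
      have hpnp : p ∣ n / p := by
        rw [hnp1]
        exact dvd_mul_of_dvd_right (dvd_pow_self p (by omega)) T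
      have hexp := cyclotomic_expand_eq_cyclotomic hp hpnp ℤ
      have hnp2 : n / p * p = n := Nat.div_mul_cancel hpn
      have heval := congrArg (Polynomial.eval (2:ℤ)) hexp
      rw [expand_eval, hnp2, ← hΦ, hΦp] at heval
      have hnp3 : 2 ≤ n / p := by
        rw [hnp1]
        have h1 : 0 < p ^ (k-1) := pow_pos hp.pos _
        have hT2' : 2 ≤ T := by omega
        calc 2 ≤ T := hT2'
          _ ≤ T * p ^ (k-1) := Nat.le_mul_of_pos_right T h1
      have hq1 : (1:ℝ) < (2:ℝ) ^ p := by
        apply one_lt_pow₀ (by norm_num) (by have := hp.two_le; omega)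
      have hb1 := sub_one_pow_totient_lt_cyclotomic_eval (n := n / p) (q := (2:ℝ)^p) hnp3 hq1
      have hevalR : (cyclotomic (n / p) ℝ).eval ((2:ℝ) ^ p) = (p : ℝ) := by
        have e1 : (cyclotomic (n/p) ℝ).eval ((2:ℝ) ^ p) = (((cyclotomic (n/p) ℤ).eval ((2:ℤ)^p) : ℤ) : ℝ) := by
          have := evalCast ℝ (n/p) ((2:ℤ)^p)
          push_cast at this ⊢
          rw [← this]
        rw [e1, heval]
        push_cast
        ring
      rw [hevalR] at hb1
      have hφ1 : 0 < (n/p).totient := Nat.totient_pos.mpr (by omega)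
      have hgt := two_pow_gt p hp.two_le
      have hcast : ((p:ℝ) + 1) < (2:ℝ)^p := by exact_mod_cast hgt
      have hp2r : (2:ℝ) ≤ (p:ℝ) := by exact_mod_cast hp.two_le
      have hbase : (1:ℝ) ≤ (2:ℝ)^p - 1 := by linarith
      have hc2 : ((2:ℝ)^p - 1) ≤ ((2:ℝ)^p - 1) ^ (n/p).totient :=
        le_self_pow₀ hbase (by omega)
      linarith
  · -- good case
    push_neg at H
    obtain ⟨p, hp, hpc, hpn⟩ := H
    haveI := Fact.mk hp
    have hpodd : p ≠ 2 := by
      rintro rfl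
      have : (2:ℕ) ∣ 2^n - 1 := dvd_trans hpc hcdvd
      have h1 : (1:ℕ) ≤ 2 ^ n := Nat.one_le_two_pow
      have : 2 ∣ 2^n := dvd_pow_self 2 (by omega)
      omega
    haveI : NeZero ((n : ℕ) : ZMod p) := ⟨by
      rw [Ne, ZMod.natCast_eq_zero_iff]; exact hpn⟩
    -- 2 is a root of cyclotomic n over ZMod p
    have hroot : IsRoot (cyclotomic n (ZMod p)) 2 := by
      have : (((cyclotomic n ℤ).eval 2 : ℤ) : ZMod p) = 0 := by
        show ((Φ : ℤ) : ZMod p) = 0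
        rw [← hcΦ, ZMod.intCast_zmod_eq_zero_iff_dvd]
        exact_mod_cast hpc
      have h2 := evalCast (ZMod p) n 2
      rw [IsRoot.def]
      rw [show ((2:ZMod p)) = ((2:ℤ) : ZMod p) by norm_num] at *
      rw [h2, this]
    have hprim : IsPrimitiveRoot (2 : ZMod p) n :=
      (Polynomial.isRoot_cyclotomic_iff).mp hroot
    have horder : ∀ m : ℕ, 0 < m → p ∣ 2 ^ m - 1 → 2 * t ∣ m := by
      intro m hm hdvd
      have h1 : (1:ℕ) ≤ 2 ^ m := Nat.one_le_two_pow
      have : ((2:ZMod p)) ^ m = 1 := by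
        have : ((2 ^ m - 1 : ℕ) : ZMod p) = 0 := by
          rw [ZMod.natCast_eq_zero_iff]; exact hdvd
        push_cast [h1] at this
        linear_combination this
      exact hprim.pow_eq_one_iff_dvd m |>.mp this
    refine ⟨p, hp, ?_, horder⟩
    -- p ∣ 2^t + 1
    have h2n : ((2:ZMod p)) ^ n = 1 := hprim.pow_eq_one
    have hsq : ((2:ZMod p)^t - 1) * ((2:ZMod p)^t + 1) = 0 := by
      have : ((2:ZMod p))^n = ((2:ZMod p)^t)^2 := by
        rw [← pow_mul]; congr 1; omega
      rw [this] at h2n; ring_nf; linear_combination h2n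
    rcases mul_eq_zero.mp hsq with h | h
    · exfalso
      have : ((2:ZMod p))^t = 1 := by linear_combination h
      have hdvd2 := hprim.pow_eq_one_iff_dvd t |>.mp this
      have := Nat.le_of_dvd (by omega) hdvd2
      omega
    · have : ((2 ^ t + 1 : ℕ) : ZMod p) = 0 := by push_cast; linear_combination h
      rwa [ZMod.natCast_eq_zero_iff] at this

private lemma head_absurd (a : ℕ) (ha : 1 ≤ a) (k l : List ℕ) (hak : a ∈ k)
    (hk : ∀ x ∈ k, x ≤ a) (hl : ∀ x ∈ l, x < a)
    (heq : (k.map genusFactor).prod = (l.map genusFactor).prod) : False := by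
  have hlen := length_eq heq
  have hnat := natEq heq
  rcases Nat.lt_or_ge a 3 with ha3 | ha3
  · rcases Nat.lt_or_ge a 2 with ha2 | ha2
    · -- a = 1, use p = 3
      have ha1 : a = 1 := by omega
      subst ha1
      have hfac := congrArg (fun m => m.factorization 3) hnat
      rw [fact_expr, fact_expr, sum_v3 k hk, sum_v3 l (fun x hx => by have := hl x hx; omega),
        fact_prime_apply 3 3 (by norm_num), fact_prime_apply 2 3 (by norm_num)] at hfac
      norm_num at hfac
      have hsum0 : l.sum = 0 := List.sum_eq_zero (fun x hx => by have := hl x hx; omega)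
      have hks := mem_le_sum hak
      omega
    · -- a = 2, use p = 2
      have ha2' : a = 2 := by omega
      subst ha2'
      have hfac := congrArg (fun m => m.factorization 2) hnat
      rw [fact_expr, fact_expr,
        fact_prime_apply 3 2 (by norm_num), fact_prime_apply 2 2 (by norm_num)] at hfac
      norm_num at hfac
      have e1 := sum_v2 k hk
      have e2 := sum_v2 l (fun x hx => by have := hl x hx; omega)
      have hcl : l.count 2 = 0 := by
        rw [List.count_eq_zero]
        intro hmem
        have := hl 2 hmem
        omega
      have hck : 0 < k.count 2 := List.count_pos_iff.mpr hak
      omega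
  · -- a ≥ 3 : Bang prime
    obtain ⟨p, hp, hpdvd, hord⟩ := bang (2*a - 1) ⟨a - 1, by omega⟩ (by omega)
    have hne2 : p ≠ 2 := by
      rintro rfl
      have h1 : (2:ℕ) ∣ 2 ^ (2*a-1) := dvd_pow_self 2 (by omega)
      omega
    have hne3 : p ≠ 3 := by
      rintro rfl
      have h1 := hord 2 (by norm_num) (by norm_num)
      have := Nat.le_of_dvd (by norm_num) h1
      omega
    have hne5 : p ≠ 5 := by
      rintro rfl
      have h1 := hord 4 (by norm_num) (by norm_num)
      have := Nat.le_of_dvd (by norm_num) h1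
      omega
    have hsq : ∀ x : ℕ, 1 ≤ x → (2:ℕ) ^ (2*(2*x-1)) - 1 = (2 ^ (2*x-1) + 1) * (2 ^ (2*x-1) - 1) := by
      intro x hx
      have h2 : (2:ℕ) ^ (2*(2*x-1)) = 2 ^ (2*x-1) * 2 ^ (2*x-1) := by
        rw [two_mul, pow_add]
      obtain ⟨d, hd⟩ : ∃ d, (2:ℕ) ^ (2*x-1) = d + 1 :=
        ⟨2 ^ (2*x-1) - 1, by have : (1:ℕ) ≤ 2 ^ (2*x-1) := Nat.one_le_two_pow; omega⟩
      rw [h2, hd]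
      have hr : (d+1)*(d+1) = ((d+1)+1)*((d+1)-1) + 1 := by
        simp [Nat.add_sub_cancel]
        ring
      omega
    have hnotdvd : ∀ x : ℕ, 1 ≤ x → x < a → ¬ p ∣ 2 ^ (2*x-1) + 1 := by
      intro x hx1 hxa hdvd
      have h1 : p ∣ 2 ^ (2*(2*x-1)) - 1 := by
        rw [hsq x hx1]
        exact hdvd.mul_right _
      have h2 := hord (2*(2*x-1)) (by omega) h1
      have := Nat.le_of_dvd (by omega) h2
      omega
    have hvx : ∀ x, x < a → (Nfac x).factorization p = 0 := by
      intro x hxa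
      apply Nat.factorization_eq_zero_of_not_dvd
      intro hdvd
      unfold Nfac at hdvd
      rcases (Nat.Prime.dvd_mul hp).mp hdvd with h | h
      · rcases (Nat.Prime.dvd_mul hp).mp h with h' | h'
        · exact hne5 ((Nat.prime_dvd_prime_iff_eq hp (by norm_num)).mp h')
        · exact hne3 ((Nat.prime_dvd_prime_iff_eq hp (by norm_num)).mp (hp.dvd_of_dvd_pow h'))
      · rcases Nat.eq_zero_or_pos x with rfl | hx1
        · norm_num at h
          exact hne3 ((Nat.prime_dvd_prime_iff_eq hp (by norm_num)).mp h)
        · rw [four_pow_eq x hx1] at h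
          rcases (Nat.Prime.dvd_mul hp).mp h with h' | h'
          · exact hne2 ((Nat.prime_dvd_prime_iff_eq hp (by norm_num)).mp h')
          · exact hnotdvd x hx1 hxa h'
    have hva : 0 < (Nfac a).factorization p := by
      apply Nat.Prime.factorization_pos_of_dvd hp (Nfac_pos a).ne'
      unfold Nfac
      have h4 : (4:ℕ) ^ a + 2 = 2 * (2 ^ (2*a-1) + 1) := four_pow_eq a (by omega)
      exact Dvd.dvd.mul_left (h4 ▸ hpdvd.mul_left 2) _
    have hfac := congrArg (fun m => m.factorization p) hnat
    rw [fact_expr, fact_expr,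
      fact_prime_apply 3 p (by norm_num), fact_prime_apply 2 p (by norm_num)] at hfac
    have h3p : ¬ (3:ℕ) = p := fun h => hne3 h.symm
    have h2p : ¬ (2:ℕ) = p := fun h => hne2 h.symm
    simp only [if_neg h3p, if_neg h2p] at hfac
    rw [sum_ite_count a ((Nfac a).factorization p) _ k
      (fun x hx => by
        rcases eq_or_ne x a with rfl | hne
        · rw [if_pos rfl]
        · rw [if_neg hne]
          exact hvx x (by have := hk x hx; omega)),
      sum_ite_count a 0 _ l
      (fun x hx => by
        rw [hvx x (hl x hx)]
        split_ifs <;> rfl)] at hfac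
    have hck : 0 < k.count a := List.count_pos_iff.mpr hak
    simp only [zero_mul, mul_zero, add_zero, zero_add] at hfac
    have hpos := Nat.mul_pos hva hck
    omega

/-- If two weakly decreasing tuples of natural numbers (given as sorted lists)
have the same product of genus factors, then they are equal (in particular
they have the same length). -/
theorem eq_of_prod_genusFactor_eq (k l : List ℕ)
    (hk : k.Pairwise (· ≥ ·)) (hl : l.Pairwise (· ≥ ·))
    (h : (k.map genusFactor).prod = (l.map genusFactor).prod) :
    k = l := by
  induction k generalizing l with
  | nil =>
    have hlen := length_eq h
    simp only [List.length_nil] at hlen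
    exact (List.length_eq_zero_iff.mp hlen.symm).symm
  | cons a k' ih =>
    cases l with
    | nil =>
      have hlen := length_eq h
      simp at hlen
    | cons b l' =>
      have hsk := List.pairwise_cons.mp hk
      have hsl := List.pairwise_cons.mp hl
      have hab : a = b := by
        by_contra hne
        rcases Nat.lt_or_ge a b with hlt | hge
        · refine head_absurd b (by omega) (b :: l') (a :: k') List.mem_cons_self
            (fun x hx => ?_) (fun x hx => ?_) h.symm
          · rcases List.mem_cons.mp hx with rfl | hx'
            · exact le_rfl
            · exact hsl.1 x hx'
          · rcases List.mem_cons.mp hx with rfl | hx'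
            · omega
            · have := hsk.1 x hx'
              omega
        · have hlt : b < a := by omega
          refine head_absurd a (by omega) (a :: k') (b :: l') List.mem_cons_self
            (fun x hx => ?_) (fun x hx => ?_) h
          · rcases List.mem_cons.mp hx with rfl | hx'
            · exact le_rfl
            · exact hsk.1 x hx'
          · rcases List.mem_cons.mp hx with rfl | hx'
            · omega
            · have := hsl.1 x hx'
              omega
      subst hab
      have hprod : genusFactor a * (k'.map genusFactor).prod
          = genusFactor a * (l'.map genusFactor).prod := by
        simpa using h
      have h' := mul_left_cancel₀ (genusFactor_pos a).ne' hprod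
      rw [ih l' hsk.2 hsl.2 h']
end

section
/- The map from finite multisets of natural numbers to ℚ sending a multiset S to the product ∏_{k ∈ S} 5·(3/2)^{k−1}·(2^{2k−1}+1) is injective. -/
namespace ZsygAux

open Polynomial

lemma cyclo_mul_dvd {n d : ℕ} (hn : 0 < n) (hd : d ∣ n) (hne : d ≠ n) :
    ((2:ℤ)^d - 1) * (cyclotomic n ℤ).eval 2 ∣ (2:ℤ)^n - 1 := by
  have hd0 : 0 < d := Nat.pos_of_dvd_of_pos hd hn
  have hpoly : (X^d - 1 : ℤ[X]) * cyclotomic n ℤ ∣ (X^n - 1 : ℤ[X]) := by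
    rw [← prod_cyclotomic_eq_X_pow_sub_one hd0 ℤ, ← prod_cyclotomic_eq_X_pow_sub_one hn ℤ]
    have hnotmem : n ∉ Nat.divisors d := fun h =>
      hne (Nat.dvd_antisymm hd (Nat.mem_divisors.mp h).1)
    have hsub : insert n (Nat.divisors d) ⊆ Nat.divisors n := by
      intro e he
      rcases Finset.mem_insert.mp he with rfl | he
      · exact Nat.mem_divisors.mpr ⟨dvd_rfl, hn.ne'⟩
      · exact Nat.mem_divisors.mpr ⟨(Nat.mem_divisors.mp he).1.trans hd, hn.ne'⟩
    calc (∏ e ∈ Nat.divisors d, cyclotomic e ℤ) * cyclotomic n ℤ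
        = ∏ e ∈ insert n (Nat.divisors d), cyclotomic e ℤ := by
          rw [Finset.prod_insert hnotmem]; ring
    _ ∣ ∏ e ∈ Nat.divisors n, cyclotomic e ℤ := Finset.prod_dvd_prod_of_subset _ _ _ hsub
  have h2 := map_dvd (Polynomial.evalRingHom (2:ℤ)) hpoly
  simpa using h2


noncomputable def Phi (n : ℕ) : ℕ := ((cyclotomic n ℤ).eval 2).toNat

lemma Phi_cast {n : ℕ} (hn : 2 < n) : ((Phi n : ℕ) : ℤ) = (cyclotomic n ℤ).eval 2 :=
  Int.toNat_of_nonneg (cyclotomic_pos hn 2).le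

lemma Phi_mul_dvd {n d : ℕ} (hn : 2 < n) (hd : d ∣ n) (hne : d ≠ n) :
    (2^d - 1) * Phi n ∣ 2^n - 1 := by
  have h := cyclo_mul_dvd (by omega) hd hne
  rw [← Phi_cast hn] at h
  have h1 : (1:ℕ) ≤ 2^d := Nat.one_le_two_pow
  have h2 : (1:ℕ) ≤ 2^n := Nat.one_le_two_pow
  zify [h1, h2]
  exact h

lemma Phi_dvd {n : ℕ} (hn : 2 < n) : Phi n ∣ 2^n - 1 := by
  have h := Phi_mul_dvd hn (one_dvd n) (by omega)
  simpa using h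

lemma Phi_gt_one {n : ℕ} (hn : 2 < n) : 1 < Phi n := by
  have h := sub_one_lt_natAbs_cyclotomic_eval (n := n) (q := 2) (by omega) (by norm_num)
  have heq : Phi n = ((cyclotomic n ℤ).eval 2).natAbs := by
    have h1 := Phi_cast hn
    have h2 := Int.natAbs_of_nonneg (cyclotomic_pos hn (2:ℤ)).le
    omega
  rw [heq]
  exact_mod_cast h


variable {p : ℕ} [hp : Fact p.Prime]

lemma two_unit (hp2 : p ≠ 2) : (2 : ZMod p) ≠ 0 := by
  have h : ¬ p ∣ 2 := fun h => hp2 ((Nat.prime_dvd_prime_iff_eq hp.out (by norm_num)).mp h)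
  have : ((2:ℕ) : ZMod p) ≠ 0 := by
    rw [Ne, ZMod.natCast_eq_zero_iff]; exact h
  simpa using this

lemma ord_pos (hp2 : p ≠ 2) : 0 < orderOf (2 : ZMod p) := by
  have h1 : (2 : ZMod p) ^ (p - 1) = 1 := ZMod.pow_card_sub_one_eq_one (two_unit hp2)
  have hp1 : 0 < p - 1 := by have := hp.out.two_le; omega
  exact (isOfFinOrder_iff_pow_eq_one.mpr ⟨p - 1, hp1, h1⟩).orderOf_pos

lemma dvd_iff (hp2 : p ≠ 2) (k : ℕ) :
    p ∣ 2^k - 1 ↔ orderOf (2 : ZMod p) ∣ k := by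
  rw [orderOf_dvd_iff_pow_eq_one]
  have h1 : (1:ℕ) ≤ 2^k := Nat.one_le_two_pow
  constructor
  · intro h
    have : ((2^k - 1 : ℕ) : ZMod p) = 0 := (ZMod.natCast_eq_zero_iff _ _).mpr h
    rw [Nat.cast_sub h1] at this
    push_cast at this
    have h2 : ((2:ZMod p))^k - 1 = 0 := this
    rw [sub_eq_zero] at h2
    exact h2
  · intro h
    rw [← ZMod.natCast_eq_zero_iff, Nat.cast_sub h1]
    push_cast
    rw [sub_eq_zero]
    exact_mod_cast h

lemma ord_dvd_p_sub_one (hp2 : p ≠ 2) : orderOf (2 : ZMod p) ∣ p - 1 :=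
  orderOf_dvd_of_pow_eq_one (ZMod.pow_card_sub_one_eq_one (two_unit hp2))

lemma not_p_dvd_ord (hp2 : p ≠ 2) : ¬ p ∣ orderOf (2 : ZMod p) := by
  intro h
  have h1 := Nat.le_of_dvd (ord_pos hp2) h
  have h2 := Nat.le_of_dvd (by have := hp.out.two_le; omega) (ord_dvd_p_sub_one hp2)
  have h3 := hp.out.two_le
  omega

lemma lte_val (hp2 : p ≠ 2) {t : ℕ} (ht : 0 < t) :
    padicValNat p (2^(orderOf (2 : ZMod p) * t) - 1) =
      padicValNat p (2^(orderOf (2 : ZMod p)) - 1) + padicValNat p t := by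
  set d0 := orderOf (2 : ZMod p) with hd0
  have hd0pos : 0 < d0 := ord_pos hp2
  have hx1 : (1:ℕ) ≤ 2^d0 := Nat.one_le_two_pow
  have hpx : p ∣ 2^d0 - 1 := (dvd_iff hp2 d0).mpr dvd_rfl
  have hnpx : ¬ p ∣ 2^d0 := fun h =>
    hp2 ((Nat.prime_dvd_prime_iff_eq hp.out (by norm_num)).mp (hp.out.dvd_of_dvd_pow h))
  have hlte := Nat.emultiplicity_pow_sub_pow hp.out (hp.out.odd_of_ne_two hp2)
    (x := 2^d0) (y := 1) (by simpa using hpx) (by simpa using hnpx) t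
  rw [one_pow, ← pow_mul] at hlte
  have h1 : 0 < 2^(d0*t) - 1 := by
    have : 2^1 ≤ 2^(d0*t) := Nat.pow_le_pow_right (by norm_num) (by nlinarith)
    omega
  have h2 : 0 < 2^d0 - 1 := by
    have : 2^1 ≤ 2^d0 := Nat.pow_le_pow_right (by norm_num) (by omega)
    omega
  rw [← padicValNat_eq_emultiplicity h1.ne', ← padicValNat_eq_emultiplicity h2.ne',
    ← padicValNat_eq_emultiplicity ht.ne'] at hlte
  exact_mod_cast hlte


lemma prime_ne_two_of_dvd_two_pow_sub_one {q n : ℕ} (hq : q.Prime) (hn : 0 < n)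
    (h : q ∣ 2^n - 1) : q ≠ 2 := by
  rintro rfl
  have h1 : 2^1 ≤ 2^n := Nat.pow_le_pow_right (by norm_num) hn
  have h2 : 2 ∣ 2^n := dvd_pow_self 2 hn.ne'
  omega

theorem bad_struct {m : ℕ} (hm : Odd m) (hm5 : 5 ≤ m) (pp : p.Prime)
    (hdvdPhi : p ∣ Phi (2*m)) (hdvdn : p ∣ 2*m) :
    ∃ e j : ℕ, 1 ≤ e ∧ 1 ≤ j ∧ orderOf (2 : ZMod p) = 2*e ∧ m = e * p^j ∧ e ∣ m ∧
      padicValNat p (Phi (2*m)) ≤ 1 := by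
  set n := 2*m with hn_def
  have hn : 2 < n := by omega
  have hm0 : 0 < m := by omega
  have hpn' : p ∣ 2^n - 1 := hdvdPhi.trans (Phi_dvd hn)
  have hp2 : p ≠ 2 := prime_ne_two_of_dvd_two_pow_sub_one pp (by omega) hpn'
  set d0 := orderOf (2 : ZMod p) with hd0_def
  have hd0pos : 0 < d0 := ord_pos hp2
  have hd0n : d0 ∣ n := (dvd_iff hp2 n).mp hpn'
  -- Phi n ∣ 2^m + 1
  have hsplit : (2^m - 1) * (2^m + 1) = 2^n - 1 := by
    have h1 : (1:ℕ) ≤ 2^m := Nat.one_le_two_pow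
    have h2 : 2^n = 2^m * 2^m := by rw [hn_def, two_mul, pow_add]
    have h3 : (1:ℕ) ≤ 2^n := Nat.one_le_two_pow
    zify [h1, h3]
    push_cast [h2]
    ring
  have hΦm1 : Phi n ∣ 2^m + 1 := by
    have hdvd := Phi_mul_dvd hn (d := m) ⟨2, by omega⟩ (by omega)
    rw [← hsplit] at hdvd
    have h1 : 0 < 2^m - 1 := by
      have : 2^1 ≤ 2^m := Nat.pow_le_pow_right (by norm_num) (by omega)
      omega
    have := (Nat.mul_dvd_mul_iff_left h1).mp hdvd
    exact this
  have hpm1 : p ∣ 2^m + 1 := hdvdPhi.trans hΦm1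
  have hd0notm : ¬ d0 ∣ m := by
    intro h
    have h1 : p ∣ 2^m - 1 := (dvd_iff hp2 m).mpr h
    have h2 : (1:ℕ) ≤ 2^m := Nat.one_le_two_pow
    have h3 : p ∣ 2 := by
      have := Nat.dvd_sub hpm1 h1
      have he : 2^m + 1 - (2^m - 1) = 2 := by omega
      rwa [he] at this
    exact hp2 ((Nat.prime_dvd_prime_iff_eq pp (by norm_num)).mp h3)
  -- d0 even
  have hd0even : 2 ∣ d0 := by
    by_contra hodd
    have hcop : Nat.Coprime d0 2 :=
      ((Nat.Prime.coprime_iff_not_dvd Nat.prime_two).mpr (by omega)).symm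
    have hdd : d0 ∣ 2 * m := by rwa [hn_def] at hd0n
    exact hd0notm (hcop.dvd_of_dvd_mul_left hdd)
  obtain ⟨e, he⟩ := hd0even
  have hepos : 0 < e := by omega
  have hem : e ∣ m := by
    have : 2*e ∣ 2*m := by rw [← he]; exact hd0n
    exact (mul_dvd_mul_iff_left (by norm_num : (2:ℕ) ≠ 0)).mp this
  have hpd0 : ¬ p ∣ d0 := not_p_dvd_ord hp2
  -- s := n / d0
  obtain ⟨s, hs⟩ := hd0n
  have hspos : 0 < s := by
    rcases Nat.eq_zero_or_pos s with rfl | h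
    · omega
    · exact h
  have hps : p ∣ s := by
    have : p ∣ d0 * s := by rw [← hs]; exact hdvdn
    rcases (Nat.Prime.dvd_mul pp).mp this with h | h
    · exact absurd h hpd0
    · exact h
  -- key: all prime divisors of s are p
  have key : ∀ ℓ : ℕ, ℓ.Prime → ℓ ∣ s → ℓ = p := by
    intro ℓ hℓ hℓs
    by_contra hne
    obtain ⟨u, hu⟩ := hℓs
    have hupos : 0 < u := by
      rcases Nat.eq_zero_or_pos u with rfl | h
      · omega
      · exact h
    have hk'dvd : d0 * u ∣ n := ⟨ℓ, by rw [hs, hu]; ring⟩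
    have hk'ne : d0 * u ≠ n := by
      intro hEq
      have hl2 := hℓ.two_le
      have : n = d0 * u * ℓ := by rw [hs, hu]; ring
      nlinarith [hd0pos, hupos]
    have hdvd2 := Phi_mul_dvd hn hk'dvd hk'ne
    -- p * (2^(d0*u) - 1) ∣ 2^n - 1
    have hppow : p * (2^(d0*u) - 1) ∣ 2^n - 1 := by
      refine dvd_trans ?_ hdvd2
      rw [mul_comm p _]
      exact Nat.mul_dvd_mul_left _ hdvdPhi
    have h2npos : 0 < 2^n - 1 := by
      have : 2^1 ≤ 2^n := Nat.pow_le_pow_right (by norm_num) (by omega)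
      omega
    have hk'pos : 0 < 2^(d0*u) - 1 := by
      have : 2^1 ≤ 2^(d0*u) := Nat.pow_le_pow_right (by norm_num) (by nlinarith)
      omega
    -- valuations
    have hval1 : padicValNat p (p * (2^(d0*u) - 1)) ≤ padicValNat p (2^n - 1) := by
      have hdd : ∀ c : ℕ, p^c ∣ p * (2^(d0*u) - 1) → p^c ∣ 2^n - 1 := fun c hc => hc.trans hppow
      have h1 : p ^ padicValNat p (p * (2^(d0*u)-1)) ∣ p * (2^(d0*u)-1) := pow_padicValNat_dvd
      have h2 := hdd _ h1
      exact (padicValNat_dvd_iff_le h2npos.ne').mp h2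
    have hvmul : padicValNat p (p * (2^(d0*u) - 1)) = 1 + padicValNat p (2^(d0*u) - 1) := by
      rw [padicValNat.mul (by exact pp.pos.ne') hk'pos.ne', padicValNat_self]
    have hlte1 : padicValNat p (2^(d0*s) - 1) =
        padicValNat p (2^d0 - 1) + padicValNat p s := lte_val hp2 hspos
    have hlte2 : padicValNat p (2^(d0*u) - 1) =
        padicValNat p (2^d0 - 1) + padicValNat p u := lte_val hp2 hupos
    have hvs : padicValNat p s = padicValNat p u := by
      rw [hu, padicValNat.mul (by exact hℓ.pos.ne') hupos.ne',
        padicValNat.eq_zero_of_not_dvd (fun hd => hne ((Nat.prime_dvd_prime_iff_eq pp hℓ).mp hd).symm)]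
      omega
    rw [← hs] at hlte1
    omega
  have hsne : s ≠ 0 := hspos.ne'
  have hspow := Nat.eq_prime_pow_of_unique_prime_dvd hsne (fun {q} hq hqs => key q hq hqs)
  set j := s.primeFactorsList.length with hj_def
  have hj1 : 1 ≤ j := by
    by_contra h
    have : j = 0 := by omega
    rw [this] at hspow
    simp at hspow
    rw [hspow] at hps
    exact absurd (Nat.le_of_dvd (by norm_num) hps) (by have := pp.two_le; omega)
  have hmej : m = e * p^j := by
    have : 2*m = 2*(e * p^j) := by
      rw [hn_def] at hs
      rw [hs, he, hspow]
      ring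
    omega
  -- v_p(Phi n) ≤ 1
  have hvPhi : padicValNat p (Phi n) ≤ 1 := by
    have hk'' : d0 * p^(j-1) ∣ n := ⟨p, by rw [hs, hspow]; rw [mul_assoc, ← pow_succ]; congr 2; omega⟩
    have hk''ne : d0 * p^(j-1) ≠ n := by
      intro hEq
      have hn2 : n = d0 * p^(j-1) * p := by rw [hs, hspow, mul_assoc, ← pow_succ]; congr 2; omega
      have := pp.two_le
      nlinarith [hd0pos, pow_pos pp.pos (j-1)]
    have hdvd3 := Phi_mul_dvd hn hk'' hk''ne
    have hΦpow : p ^ padicValNat p (Phi n) * (2^(d0 * p^(j-1)) - 1) ∣ 2^n - 1 := by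
      refine dvd_trans ?_ hdvd3
      rw [mul_comm]
      exact Nat.mul_dvd_mul_left _ pow_padicValNat_dvd
    have h2npos : 0 < 2^n - 1 := by
      have : 2^1 ≤ 2^n := Nat.pow_le_pow_right (by norm_num) (by omega)
      omega
    have hk''pos' : 0 < p^(j-1) := pow_pos pp.pos _
    have hk''pos : 0 < 2^(d0 * p^(j-1)) - 1 := by
      have : 2^1 ≤ 2^(d0 * p^(j-1)) := Nat.pow_le_pow_right (by norm_num) (by nlinarith)
      omega
    have hval1 : padicValNat p (p ^ padicValNat p (Phi n) * (2^(d0 * p^(j-1)) - 1))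
        ≤ padicValNat p (2^n - 1) :=
      (padicValNat_dvd_iff_le h2npos.ne').mp (pow_padicValNat_dvd.trans hΦpow)
    have hlte1 : padicValNat p (2^(d0*s) - 1) =
        padicValNat p (2^d0 - 1) + padicValNat p s := lte_val hp2 hspos
    have hlte2 : padicValNat p (2^(d0*p^(j-1)) - 1) =
        padicValNat p (2^d0 - 1) + padicValNat p (p^(j-1)) := lte_val hp2 hk''pos'
    have hvs : padicValNat p s = j := by rw [hspow]; exact padicValNat.prime_pow _
    have hvpj : padicValNat p (p^(j-1)) = j-1 := padicValNat.prime_pow _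
    have hvsplit : padicValNat p (p ^ padicValNat p (Phi n) * (2^(d0 * p^(j-1)) - 1)) =
        padicValNat p (Phi n) + padicValNat p (2^(d0*p^(j-1)) - 1) := by
      rw [padicValNat.mul (pow_ne_zero _ pp.pos.ne') hk''pos.ne', padicValNat.prime_pow]
    rw [← hs] at hlte1
    omega
  exact ⟨e, j, hepos, hj1, he, hmej, hem, hvPhi⟩


lemma step1 {e p : ℕ} (pp : p.Prime) (t : ℕ) :
    ∀ x : ℤ, (cyclotomic (2*e*p^(t+1)) ℤ).eval x = (cyclotomic (2*e*p) ℤ).eval (x^(p^t)) := by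
  induction t with
  | zero => intro x; simp
  | succ t iht =>
    intro x
    have hdvd : p ∣ 2*e*p^(t+1) := ⟨2*e*p^t, by ring⟩
    have hexp := cyclotomic_expand_eq_cyclotomic pp hdvd (R := ℤ)
    have harith : 2*e*p^(t+1)*p = 2*e*p^(t+2) := by ring
    calc (cyclotomic (2*e*p^(t+2)) ℤ).eval x
        = (expand ℤ p (cyclotomic (2*e*p^(t+1)) ℤ)).eval x := by rw [hexp, harith]
      _ = (cyclotomic (2*e*p^(t+1)) ℤ).eval (x^p) := expand_eval p _ x
      _ = (cyclotomic (2*e*p) ℤ).eval ((x^p)^(p^t)) := iht _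
      _ = (cyclotomic (2*e*p) ℤ).eval (x^(p^(t+1))) := by rw [← pow_mul, pow_succ']

lemma phi_chain {e p j : ℕ} (pp : p.Prime) (hpe : ¬ p ∣ 2*e) (hj : 1 ≤ j) :
    (cyclotomic (2*e*p^j) ℤ).eval 2 * (cyclotomic (2*e) ℤ).eval (2^(p^(j-1))) =
      (cyclotomic (2*e) ℤ).eval ((2^(p^(j-1)))^p) := by
  obtain ⟨t, rfl⟩ : ∃ t, j = t+1 := ⟨j-1, by omega⟩
  have h1 := step1 pp (e := e) t (2:ℤ)
  have hmul := cyclotomic_expand_eq_cyclotomic_mul pp hpe (R := ℤ)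
  have h2 := congrArg (eval ((2:ℤ)^(p^t))) hmul
  rw [expand_eval, eval_mul] at h2
  rw [Nat.add_sub_cancel, h1]
  exact h2.symm

-- arithmetic helper
lemma two_pow_ge {k : ℕ} (hk : 4 ≤ k) : 2*(k+1) ≤ 2^k := by
  induction k with
  | zero => omega
  | succ k ih =>
    rcases Nat.lt_or_ge k 4 with h | h
    · interval_cases k <;> simp_all <;> omega
    · have := ih h
      have : 2^k ≤ 2^(k+1) := Nat.pow_le_pow_right (by norm_num) (by omega)
      omega

lemma bad_bound {e p j m : ℕ} (pp : p.Prime) (hp2 : p ≠ 2) (he : 1 ≤ e) (hj : 1 ≤ j)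
    (hpe : ¬ p ∣ 2*e) (hm : m = e * p^j) (hm5 : 5 ≤ m) (hPhi : Phi (2*m) = p) : False := by
  have hn : 2 < 2*m := by omega
  have h2m : 2*m = 2*e*p^j := by rw [hm]; ring
  have hchain := phi_chain (e := e) (j := j) pp hpe hj
  rw [← h2m] at hchain
  have hPhiZ : (cyclotomic (2*m) ℤ).eval 2 = (p : ℤ) := by
    rw [← Phi_cast hn, hPhi]
  rw [hPhiZ] at hchain
  -- move to ℝ
  set Y : ℝ := 2^(p^(j-1)) with hY
  have hY2 : (2:ℝ) ≤ Y := by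
    rw [hY]
    calc (2:ℝ) = 2^1 := by norm_num
    _ ≤ 2^(p^(j-1)) := by
        apply pow_le_pow_right₀ (by norm_num)
        exact Nat.one_le_iff_ne_zero.mpr (pow_ne_zero _ pp.pos.ne')
  have hY1 : (1:ℝ) < Y := by linarith
  have hcast : ∀ (k : ℕ) (z : ℤ), (((cyclotomic k ℤ).eval z : ℤ) : ℝ) = (cyclotomic k ℝ).eval (z : ℝ) := by
    intro k z
    have := (cyclotomic.eval_apply z k (algebraMap ℤ ℝ)).symm
    simpa using this
  have hchainR := congrArg (fun z : ℤ => (z : ℝ)) hchain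
  simp only [Int.cast_mul, Int.cast_natCast] at hchainR
  rw [hcast, hcast] at hchainR
  push_cast at hchainR
  -- hchainR : p * (cyclotomic (2*e) ℝ).eval Y = (cyclotomic (2*e) ℝ).eval (Y^p)
  set t := (2*e).totient with ht
  have htpos : 0 < t := by rw [ht]; exact Nat.totient_pos.mpr (by omega)
  have hlow : (Y^p - 1)^t < (cyclotomic (2*e) ℝ).eval (Y^p) := by
    apply sub_one_pow_totient_lt_cyclotomic_eval (by omega)
    calc (1:ℝ) < Y := hY1
    _ = Y^1 := (pow_one Y).symm
    _ ≤ Y^p := pow_le_pow_right₀ (by linarith) pp.one_lt.le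
  have hup : (cyclotomic (2*e) ℝ).eval Y ≤ (Y+1)^t :=
    cyclotomic_eval_le_add_one_pow_totient hY1 (2*e)
  have hfinal : (Y^p - 1)^t < p * (Y+1)^t := by
    calc (Y^p - 1)^t < (cyclotomic (2*e) ℝ).eval (Y^p) := hlow
    _ = p * (cyclotomic (2*e) ℝ).eval Y := by rw [hchainR]
    _ ≤ p * (Y+1)^t := by
        apply mul_le_mul_of_nonneg_left hup
        exact_mod_cast pp.pos.le
  -- now contradiction by cases
  have hp3 : p = 3 ∨ 5 ≤ p := by
    have h2 := pp.two_le
    rcases Nat.lt_or_ge p 5 with h | h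
    · interval_cases p
      · exact absurd rfl hp2
      · exact Or.inl rfl
      · exact absurd pp (by norm_num)
    · exact Or.inr h
  have hYt : (0:ℝ) ≤ Y + 1 := by linarith
  rcases hp3 with rfl | hp5
  · -- p = 3
    by_cases he1 : e = 1
    · subst he1
      have ht1 : t = 1 := by rw [ht]; norm_num
      have hj2 : 2 ≤ j := by
        by_contra h
        have hj1' : j = 1 := by omega
        rw [hj1'] at hm
        simp at hm
        omega
      have hY8 : (8:ℝ) ≤ Y := by
        rw [hY]
        calc (8:ℝ) = 2^3 := by norm_num
        _ ≤ 2^(3^(j-1)) := by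
            apply pow_le_pow_right₀ (by norm_num)
            calc 3 = 3^1 := by norm_num
            _ ≤ 3^(j-1) := Nat.pow_le_pow_right (by norm_num) (by omega)
      rw [ht1] at hfinal
      simp only [pow_one] at hfinal
      push_cast at hfinal
      nlinarith [hY8, sq_nonneg Y, mul_pos (by linarith : (0:ℝ) < Y) (by linarith : (0:ℝ) < Y)]
    · have ht2 : 2 ≤ t := by
        rcases Nat.lt_or_ge t 2 with h | h
        · have h1 : t = 1 := by omega
          rw [ht] at h1
          rcases Nat.totient_eq_one_iff.mp h1 with h2 | h2 <;> omega
        · exact h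
      have hb : 2*(Y+1) ≤ Y^3 - 1 := by nlinarith [hY2, sq_nonneg Y]
      have h1 : (2*(Y+1))^t ≤ (Y^3-1)^t := pow_le_pow_left₀ (by linarith) hb t
      have h2 : (2:ℝ)^2 ≤ 2^t := pow_le_pow_right₀ (by norm_num) ht2
      have h3 : (0:ℝ) ≤ (Y+1)^t := by positivity
      have h4 : (0:ℝ) ≤ (2:ℝ)^t := by positivity
      rw [mul_pow] at h1
      push_cast at hfinal
      nlinarith [mul_le_mul_of_nonneg_right h2 h3]
  · -- 5 ≤ p
    have hA : ((2*(p-1)+2 : ℕ) : ℝ) ≤ ((2^(p-1) : ℕ) : ℝ) := by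
      have := two_pow_ge (k := p-1) (by omega)
      exact_mod_cast (by omega : 2*(p-1)+2 ≤ 2^(p-1)).trans_eq rfl
    have hA' : (2:ℝ)*p ≤ 2^(p-1) := by
      push_cast at hA
      have hpc : ((p-1 : ℕ) : ℝ) = (p:ℝ) - 1 := by
        have := pp.two_le
        push_cast [Nat.cast_sub (by omega : 1 ≤ p)]
        ring
      rw [hpc] at hA
      linarith
    have hB : (2:ℝ)^(p-1) ≤ Y^(p-1) := pow_le_pow_left₀ (by norm_num) hY2 _
    have hC : Y^p = Y^(p-1) * Y := by
      rw [← pow_succ]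
      congr 1
      have := pp.two_le
      omega
    have hpR : (5:ℝ) ≤ (p:ℝ) := by exact_mod_cast hp5
    have hbig : (p:ℝ)*(Y+1) ≤ Y^p - 1 := by
      nlinarith [mul_le_mul_of_nonneg_right (hA'.trans hB) (by linarith : (0:ℝ) ≤ Y)]
    have h1 : ((p:ℝ)*(Y+1))^t ≤ (Y^p-1)^t := pow_le_pow_left₀ (by positivity) hbig t
    rw [mul_pow] at h1
    have h2 : (p:ℝ)^1 ≤ (p:ℝ)^t := pow_le_pow_right₀ (by exact_mod_cast pp.one_lt.le) htpos
    have h3 : (0:ℝ) ≤ (Y+1)^t := by positivity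
    have h4 : (0:ℝ) ≤ (p:ℝ)^t := by positivity
    rw [pow_one] at h2
    nlinarith [mul_le_mul_of_nonneg_right h2 h3]


lemma zmod3pow : (2 : ZMod 3)^2 = 1 := by decide
lemma zmod5pow : (2 : ZMod 5)^4 = 1 := by decide

theorem zsyg (m : ℕ) (hm : Odd m) (hm5 : 5 ≤ m) :
    ∃ p : ℕ, p.Prime ∧ p ≠ 2 ∧ p ≠ 3 ∧ p ≠ 5 ∧ p ∣ 2 ^ m + 1 ∧
      ∀ d : ℕ, d < m → ¬ p ∣ 2 ^ d + 1 := by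
  set n := 2*m with hn_def
  have hn : 2 < n := by omega
  have hΦ1 : 1 < Phi n := Phi_gt_one hn
  by_cases hgood : ∃ p : ℕ, p.Prime ∧ p ∣ Phi n ∧ ¬ p ∣ n
  · obtain ⟨p, pp, hpΦ, hpn⟩ := hgood
    haveI : Fact p.Prime := ⟨pp⟩
    have hp2 : p ≠ 2 := prime_ne_two_of_dvd_two_pow_sub_one pp (by omega)
      (hpΦ.trans (Phi_dvd hn))
    haveI : NeZero ((n : ZMod p)) := ⟨by
      rw [Ne, ZMod.natCast_eq_zero_iff]; exact hpn⟩
    have hroot : IsRoot (cyclotomic n (ZMod p)) 2 := by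
      have h0 : ((Phi n : ℕ) : ZMod p) = 0 := (ZMod.natCast_eq_zero_iff _ _).mpr hpΦ
      have h1 : (cyclotomic n (ZMod p)).eval ((2 : ℤ) : ZMod p)
          = (Int.castRingHom (ZMod p)) ((cyclotomic n ℤ).eval 2) :=
        cyclotomic.eval_apply (2 : ℤ) n (Int.castRingHom (ZMod p))
      rw [← Phi_cast hn] at h1
      unfold IsRoot
      have h2 : ((2 : ℤ) : ZMod p) = (2 : ZMod p) := by push_cast; ring
      rw [← h2, h1]
      have h3 : ((Int.castRingHom (ZMod p)) ((Phi n : ℕ) : ℤ)) = ((Phi n : ℕ) : ZMod p) := by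
        simp
      rw [h3, h0]
    have hprim : IsPrimitiveRoot (2 : ZMod p) n := isRoot_cyclotomic_iff.mp hroot
    have hord : orderOf (2 : ZMod p) = n := hprim.eq_orderOf.symm
    -- 2^m = -1 in ZMod p
    have hm1 : (2 : ZMod p)^m = -1 := by
      have hsq : ((2 : ZMod p)^m)^2 = 1 := by
        rw [← pow_mul, show m*2 = n by omega, ← hord]
        exact pow_orderOf_eq_one _
      have hne1 : (2 : ZMod p)^m ≠ 1 := by
        intro h
        have hdvd := orderOf_dvd_of_pow_eq_one h
        rw [hord] at hdvd
        have := Nat.le_of_dvd (by omega) hdvd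
        omega
      have hfac : ((2 : ZMod p)^m - 1) * ((2 : ZMod p)^m + 1) = 0 := by
        have : ((2 : ZMod p)^m)^2 - 1 = 0 := by rw [hsq]; ring
        calc ((2 : ZMod p)^m - 1) * ((2 : ZMod p)^m + 1) = ((2 : ZMod p)^m)^2 - 1 := by ring
        _ = 0 := this
      rcases mul_eq_zero.mp hfac with h | h
      · exact absurd (by rwa [sub_eq_zero] at h) hne1
      · have := eq_neg_of_add_eq_zero_left h
        exact this
    have hpdvd : p ∣ 2^m + 1 := by
      rw [← ZMod.natCast_eq_zero_iff]
      push_cast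
      rw [hm1]
      ring
    refine ⟨p, pp, hp2, ?_, ?_, hpdvd, ?_⟩
    · rintro rfl
      have : orderOf (2 : ZMod 3) ∣ 2 := orderOf_dvd_of_pow_eq_one zmod3pow
      have := Nat.le_of_dvd (by norm_num) this
      omega
    · rintro rfl
      have : orderOf (2 : ZMod 5) ∣ 4 := orderOf_dvd_of_pow_eq_one zmod5pow
      have := Nat.le_of_dvd (by norm_num) this
      omega
    · intro d hd hdvd
      rcases Nat.eq_zero_or_pos d with rfl | hd0
      · simp at hdvd
        exact hp2 ((Nat.prime_dvd_prime_iff_eq pp (by norm_num)).mp hdvd)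
      · have hd1 : (2 : ZMod p)^d = -1 := by
          have h0 : ((2^d + 1 : ℕ) : ZMod p) = 0 := (ZMod.natCast_eq_zero_iff _ _).mpr hdvd
          push_cast at h0
          linear_combination h0
        have hsq : (2 : ZMod p)^(2*d) = 1 := by
          rw [two_mul, pow_add, hd1]
          ring
        have hdvd2 := orderOf_dvd_of_pow_eq_one hsq
        rw [hord] at hdvd2
        have : m ∣ d := by
          rcases hdvd2 with ⟨c, hc⟩
          rw [hn_def, mul_assoc] at hc
          exact ⟨c, by omega⟩
        have := Nat.le_of_dvd hd0 this
        omega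
  · push_neg at hgood
    exfalso
    obtain ⟨q0, hq0p, hq0Φ⟩ := Nat.exists_prime_and_dvd (n := Phi n) (by omega)
    haveI : Fact q0.Prime := ⟨hq0p⟩
    have hq0n : q0 ∣ n := hgood q0 hq0p hq0Φ
    obtain ⟨e, j, he1, hj1, hord0, hmej, hem, hv1⟩ := bad_struct hm hm5 hq0p hq0Φ hq0n
    have hq02 : q0 ≠ 2 := prime_ne_two_of_dvd_two_pow_sub_one hq0p (by omega)
      (hq0Φ.trans (Phi_dvd hn))
    have hpe : ¬ q0 ∣ 2*e := by
      intro h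
      have h1 : q0 ≤ 2*e := Nat.le_of_dvd (by omega) h
      have h2 : 2*e ≤ q0 - 1 := Nat.le_of_dvd (by have := hq0p.two_le; omega)
        (by rw [← hord0]; exact ord_dvd_p_sub_one hq02)
      have := hq0p.two_le
      omega
    -- uniqueness of the bad prime
    have huniq : ∀ q : ℕ, q.Prime → q ∣ Phi n → q = q0 := by
      intro q hq hqΦ
      by_contra hne
      haveI : Fact q.Prime := ⟨hq⟩
      have hqn : q ∣ n := hgood q hq hqΦ
      obtain ⟨e', j', he1', hj1', hord0', hmej', hem', _⟩ := bad_struct hm hm5 hq hqΦ hqn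
      have hq2 : q ≠ 2 := prime_ne_two_of_dvd_two_pow_sub_one hq (by omega)
        (hqΦ.trans (Phi_dvd hn))
      -- q0 ∣ n = 2 * e' * q^(j'), q0 ≠ 2, q0 ≠ q ⇒ q0 ∣ e' ∣ (q-1)/2-ish ⇒ q0 < q
      have hlt1 : q0 < q := by
        have hq0n' : q0 ∣ 2 * (e' * q^(j')) := by rw [← hmej']; exact hq0n
        have h1 : q0 ∣ e' * q^(j') := by
          rcases (Nat.Prime.dvd_mul hq0p).mp hq0n' with h | h
          · exact absurd ((Nat.prime_dvd_prime_iff_eq hq0p (by norm_num)).mp h) hq02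
          · exact h
        have h2 : q0 ∣ e' := by
          rcases (Nat.Prime.dvd_mul hq0p).mp h1 with h | h
          · exact h
          · exact absurd ((Nat.prime_dvd_prime_iff_eq hq0p hq).mp (hq0p.dvd_of_dvd_pow h))
              (by exact fun hh => hne hh.symm)
        have h3 : q0 ∣ 2*e' := h2.mul_left 2
        rw [← hord0'] at h3
        have h4 := Nat.le_of_dvd (by have := hq.two_le; omega) ((h3).trans (ord_dvd_p_sub_one hq2))
        have := hq.two_le
        omega
      have hlt2 : q < q0 := by
        have hqn'' : q ∣ 2 * (e * q0^j) := by rw [← hmej]; exact hqn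
        have h1 : q ∣ e * q0^j := by
          rcases (Nat.Prime.dvd_mul hq).mp hqn'' with h | h
          · exact absurd ((Nat.prime_dvd_prime_iff_eq hq (by norm_num)).mp h) hq2
          · exact h
        have h2 : q ∣ e := by
          rcases (Nat.Prime.dvd_mul hq).mp h1 with h | h
          · exact h
          · exact absurd ((Nat.prime_dvd_prime_iff_eq hq hq0p).mp (hq.dvd_of_dvd_pow h)) hne
        have h3 : q ∣ 2*e := h2.mul_left 2
        rw [← hord0] at h3
        have h4 := Nat.le_of_dvd (by have := hq0p.two_le; omega) ((h3).trans (ord_dvd_p_sub_one hq02))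
        have := hq0p.two_le
        omega
      omega
    -- Phi n = q0
    have hΦeq : Phi n = q0 := by
      have hpow := Nat.eq_prime_pow_of_unique_prime_dvd (by omega : Phi n ≠ 0)
        (fun {d} hd hdvd => huniq d hd hdvd)
      set L := (Phi n).primeFactorsList.length with hL_def
      have hvL : padicValNat q0 (Phi n) = L := by
        rw [hpow]; exact padicValNat.prime_pow _
      have hv1' : padicValNat q0 (Phi n) ≤ 1 := by rw [hn_def]; exact hv1
      have hL1 : L ≤ 1 := by omega
      have hLpos : L ≠ 0 := by
        intro h
        rw [h, pow_zero] at hpow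
        omega
      have : L = 1 := by omega
      rw [this, pow_one] at hpow
      exact hpow
    exact bad_bound hq0p hq02 he1 hj1 hpe hmej hm5 hΦeq


end ZsygAux

namespace GenusAux

theorem zsyg (m : ℕ) (hm : Odd m) (hm5 : 5 ≤ m) :
    ∃ p : ℕ, p.Prime ∧ p ≠ 2 ∧ p ≠ 3 ∧ p ≠ 5 ∧ p ∣ 2 ^ m + 1 ∧
      ∀ d : ℕ, d < m → ¬ p ∣ 2 ^ d + 1 :=
  ZsygAux.zsyg m hm hm5

lemma genusFactor_zero : genusFactor 0 = 5 := by norm_num [genusFactor]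

lemma genusFactor_succ (k : ℕ) :
    genusFactor (k+1) = 5 * (3/2 : ℚ)^(k:ℕ) * ((2:ℚ)^(2*k+1 : ℕ)+1) := by
  have e1 : ((k+1 : ℕ) : ℤ) - 1 = ((k : ℕ) : ℤ) := by push_cast; ring
  have e2 : 2 * ((k+1 : ℕ) : ℤ) - 1 = ((2*k+1 : ℕ) : ℤ) := by push_cast; ring
  rw [genusFactor, e1, e2, zpow_natCast, zpow_natCast]

lemma genusFactor_succ' (k : ℕ) :
    genusFactor (k+1) = (((5 * 3^k * (2^(2*k+1)+1) : ℕ) : ℚ)) / ((2^k : ℕ) : ℚ) := by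
  rw [genusFactor_succ]
  push_cast
  rw [div_pow]
  ring

lemma genusFactor_pos (k : ℕ) : 0 < genusFactor k := by
  unfold genusFactor
  have h1 : (0:ℚ) < (3/2 : ℚ) ^ ((k : ℤ) - 1) := zpow_pos (by norm_num) _
  have h2 : (0:ℚ) < (2 : ℚ) ^ (2*(k : ℤ) - 1) := zpow_pos (by norm_num) _
  positivity

lemma genusFactor_ne_zero (k : ℕ) : genusFactor k ≠ 0 := (genusFactor_pos k).ne'

lemma one_lt_genusFactor (k : ℕ) : 1 < genusFactor k := by
  cases k with
  | zero => rw [genusFactor_zero]; norm_num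
  | succ k =>
    rw [genusFactor_succ]
    have h1 : (1:ℚ) ≤ (3/2 : ℚ)^(k:ℕ) := one_le_pow₀ (by norm_num)
    have h2 : (0:ℚ) < (2:ℚ)^(2*k+1 : ℕ) := by positivity
    nlinarith

lemma prod_pos (S : Multiset ℕ) : 0 < (S.map genusFactor).prod := by
  induction S using Multiset.induction_on with
  | empty => simp
  | cons a S ih => rw [Multiset.map_cons, Multiset.prod_cons]; exact mul_pos (genusFactor_pos a) ih

lemma one_le_prod (S : Multiset ℕ) : 1 ≤ (S.map genusFactor).prod := by
  induction S using Multiset.induction_on with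
  | empty => simp
  | cons a S ih =>
    rw [Multiset.map_cons, Multiset.prod_cons]
    calc (1:ℚ) = 1 * 1 := by ring
    _ ≤ genusFactor a * (S.map genusFactor).prod :=
      mul_le_mul (one_lt_genusFactor a).le ih (by norm_num) (genusFactor_pos a).le

lemma one_lt_prod (S : Multiset ℕ) (hS : S ≠ 0) : 1 < (S.map genusFactor).prod := by
  obtain ⟨a, ha⟩ := Multiset.exists_mem_of_ne_zero hS
  obtain ⟨S', rfl⟩ := Multiset.exists_cons_of_mem ha
  rw [Multiset.map_cons, Multiset.prod_cons]
  calc (1:ℚ) = 1 * 1 := by ring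
  _ < genusFactor a * (S'.map genusFactor).prod := by
      have := one_le_prod S'
      have := one_lt_genusFactor a
      nlinarith

lemma padicValRat_prod (p : ℕ) [Fact p.Prime] (S : Multiset ℕ) :
    padicValRat p ((S.map genusFactor).prod) =
      (S.map (fun k => padicValRat p (genusFactor k))).sum := by
  induction S using Multiset.induction_on with
  | empty => simp
  | cons a S ih =>
    rw [Multiset.map_cons, Multiset.prod_cons, Multiset.map_cons, Multiset.sum_cons,
      padicValRat.mul (genusFactor_ne_zero a) (prod_pos S).ne', ih]

lemma sum_map_single (S : Multiset ℕ) (g : ℕ → ℤ) (K : ℕ)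
    (hg : ∀ x ∈ S, x ≠ K → g x = 0) :
    (S.map g).sum = (S.count K : ℤ) * g K := by
  induction S using Multiset.induction_on with
  | empty => simp
  | cons a S ih =>
    rw [Multiset.map_cons, Multiset.sum_cons, Multiset.count_cons,
      ih (fun x hx => hg x (Multiset.mem_cons_of_mem hx))]
    by_cases ha : a = K
    · subst ha; simp; push_cast; ring
    · rw [hg a (Multiset.mem_cons_self a S) ha]
      have : ¬ K = a := fun h => ha h.symm
      simp [this]

lemma sum_map_three (S : Multiset ℕ) (g : ℕ → ℤ) (hS : ∀ x ∈ S, x ≤ 2) :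
    (S.map g).sum = (S.count 0 : ℤ) * g 0 + (S.count 1 : ℤ) * g 1 + (S.count 2 : ℤ) * g 2 := by
  induction S using Multiset.induction_on with
  | empty => simp
  | cons a S ih =>
    have ha : a ≤ 2 := hS a (Multiset.mem_cons_self a S)
    rw [Multiset.map_cons, Multiset.sum_cons,
      ih (fun x hx => hS x (Multiset.mem_cons_of_mem hx))]
    have : a = 0 ∨ a = 1 ∨ a = 2 := by omega
    rcases this with rfl | rfl | rfl <;>
      simp [Multiset.count_cons] <;> push_cast <;> ring


lemma not_dvd_of_prime_ne {p q : ℕ} (hp : p.Prime) (hq : q.Prime) (h : p ≠ q) : ¬ p ∣ q :=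
  fun hd => h ((Nat.prime_dvd_prime_iff_eq hp hq).mp hd)

lemma val_genusFactor_succ (p : ℕ) [hp : Fact p.Prime] (hp2 : p ≠ 2) (hp3 : p ≠ 3)
    (hp5 : p ≠ 5) (k : ℕ) :
    padicValRat p (genusFactor (k+1)) = (padicValNat p (2^(2*k+1)+1) : ℤ) := by
  have hN : (2^(2*k+1)+1 : ℕ) ≠ 0 := by positivity
  have hnum : (5 * 3^k * (2^(2*k+1)+1) : ℕ) ≠ 0 := by positivity
  have hden : (2^k : ℕ) ≠ 0 := by positivity
  have hnd : ¬ p ∣ 5 * 3^k := by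
    intro h
    rcases (Nat.Prime.dvd_mul hp.out).mp h with h | h
    · exact hp5 ((Nat.prime_dvd_prime_iff_eq hp.out (by norm_num)).mp h)
    · exact hp3 ((Nat.prime_dvd_prime_iff_eq hp.out (by norm_num)).mp (hp.out.dvd_of_dvd_pow h))
  have hd2 : ¬ p ∣ 2^k := fun h =>
    hp2 ((Nat.prime_dvd_prime_iff_eq hp.out (by norm_num)).mp (hp.out.dvd_of_dvd_pow h))
  rw [genusFactor_succ', padicValRat.div (by exact_mod_cast hnum) (by exact_mod_cast hden),
    ← padicValRat_of_nat, ← padicValRat_of_nat,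
    padicValNat.eq_zero_of_not_dvd hd2,
    padicValNat.mul (by positivity) hN, padicValNat.eq_zero_of_not_dvd hnd]
  push_cast
  ring




instance f2 : Fact (Nat.Prime 2) := ⟨by norm_num⟩
instance f3 : Fact (Nat.Prime 3) := ⟨by norm_num⟩
instance f5 : Fact (Nat.Prime 5) := ⟨by norm_num⟩

lemma pv_nat {p n : ℕ} [Fact p.Prime] (h : ¬ p ∣ n) : padicValRat p ((n:ℕ) : ℚ) = 0 := by
  rw [← padicValRat_of_nat, padicValNat.eq_zero_of_not_dvd h]
  norm_num

lemma v2_5 : padicValRat 2 (5 : ℚ) = 0 := by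
  have := pv_nat (p := 2) (n := 5) (by norm_num); exact_mod_cast this

lemma v3_5 : padicValRat 3 (5 : ℚ) = 0 := by
  have := pv_nat (p := 3) (n := 5) (by norm_num); exact_mod_cast this

lemma v5_5 : padicValRat 5 (5 : ℚ) = 1 := by
  have : padicValRat 5 ((5:ℕ) : ℚ) = padicValNat 5 5 := (padicValRat_of_nat 5).symm
  rw [padicValNat_self] at this
  exact_mod_cast this

lemma v15 : (15 : ℚ) = ((15 : ℕ) : ℚ) := by norm_num

lemma pvN_15_3 : padicValNat 3 15 = 1 := by
  have : (15 : ℕ) = 3 * 5 := by norm_num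
  rw [this, padicValNat.mul (by norm_num) (by norm_num), padicValNat_self,
    padicValNat.eq_zero_of_not_dvd (by norm_num)]

lemma v2_15 : padicValRat 2 (15 : ℚ) = 0 := by
  rw [v15, ← padicValRat_of_nat, padicValNat.eq_zero_of_not_dvd (by norm_num)]; norm_num

lemma v3_15 : padicValRat 3 (15 : ℚ) = 1 := by
  rw [v15, ← padicValRat_of_nat, pvN_15_3]; norm_num

lemma v5_15 : padicValRat 5 (15 : ℚ) = 1 := by
  have : (15 : ℕ) = 5 * 3 := by norm_num
  rw [v15, ← padicValRat_of_nat, this, padicValNat.mul (by norm_num) (by norm_num),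
    padicValNat_self, padicValNat.eq_zero_of_not_dvd (by norm_num)]
  norm_num

lemma v135 : (135/2 : ℚ) = ((135 : ℕ) : ℚ) / ((2:ℕ) : ℚ) := by norm_num

lemma v2_135 : padicValRat 2 (135/2 : ℚ) = -1 := by
  rw [v135, padicValRat.div (by norm_num) (by norm_num), ← padicValRat_of_nat,
    ← padicValRat_of_nat, padicValNat.eq_zero_of_not_dvd (by norm_num), padicValNat_self]
  norm_num

lemma pvN3_135 : padicValNat 3 135 = 3 := by
  have : (135 : ℕ) = 3^3 * 5 := by norm_num
  rw [this, padicValNat.mul (by norm_num) (by norm_num), padicValNat.prime_pow,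
    padicValNat.eq_zero_of_not_dvd (by norm_num)]

lemma v3_135 : padicValRat 3 (135/2 : ℚ) = 3 := by
  rw [v135, padicValRat.div (by norm_num) (by norm_num), ← padicValRat_of_nat,
    ← padicValRat_of_nat, pvN3_135, padicValNat.eq_zero_of_not_dvd (by norm_num)]
  norm_num

lemma pvN5_135 : padicValNat 5 135 = 1 := by
  have : (135 : ℕ) = 5 * 27 := by norm_num
  rw [this, padicValNat.mul (by norm_num) (by norm_num), padicValNat_self,
    padicValNat.eq_zero_of_not_dvd (by norm_num)]

lemma v5_135 : padicValRat 5 (135/2 : ℚ) = 1 := by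
  rw [v135, padicValRat.div (by norm_num) (by norm_num), ← padicValRat_of_nat,
    ← padicValRat_of_nat, pvN5_135, padicValNat.eq_zero_of_not_dvd (by norm_num)]
  norm_num



end GenusAux
namespace GenusAux

lemma genusFactor_one : genusFactor 1 = 15 := by norm_num [genusFactor]
lemma genusFactor_two : genusFactor 2 = 135/2 := by norm_num [genusFactor]

lemma v5_g0 : padicValRat 5 (genusFactor 0) = 1 := by rw [genusFactor_zero]; exact v5_5

theorem main : ∀ N (S T : Multiset ℕ), Multiset.card S + Multiset.card T ≤ N →
    (S.map genusFactor).prod = (T.map genusFactor).prod → S = T := by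
  intro N
  induction N with
  | zero =>
    intro S T hc _
    have hS : S = 0 := Multiset.card_eq_zero.mp (by omega)
    have hT : T = 0 := Multiset.card_eq_zero.mp (by omega)
    rw [hS, hT]
  | succ N ih =>
    intro S T hcard hprod
    by_cases hS0 : S = 0
    · subst hS0
      by_contra hT0
      have h1 := one_lt_prod T (fun h => hT0 h.symm)
      rw [← hprod] at h1; simp at h1
    by_cases hT0 : T = 0
    · subst hT0
      exfalso
      have h1 := one_lt_prod S hS0
      rw [hprod] at h1; simp at h1
    have hST : S + T ≠ 0 := by
      intro h
      apply hS0
      have hc := congrArg Multiset.card h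
      rw [Multiset.card_add] at hc
      simp only [Multiset.card_zero] at hc
      exact Multiset.card_eq_zero.mp (by omega)
    have hUne : (S + T).toFinset.Nonempty := by
      rw [Multiset.toFinset_nonempty]; exact hST
    have hKmem : (S + T).toFinset.max' hUne ∈ S + T :=
      Multiset.mem_toFinset.mp ((S+T).toFinset.max'_mem hUne)
    set K := (S + T).toFinset.max' hUne with hK
    have hSle : ∀ x ∈ S, x ≤ K := fun x hx =>
      Finset.le_max' _ x (Multiset.mem_toFinset.mpr (Multiset.mem_add.mpr (Or.inl hx)))
    have hTle : ∀ x ∈ T, x ≤ K := fun x hx =>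
      Finset.le_max' _ x (Multiset.mem_toFinset.mpr (Multiset.mem_add.mpr (Or.inr hx)))
    have hScard : S.card ≠ 0 := fun h => hS0 (Multiset.card_eq_zero.mp h)
    have hTcard : T.card ≠ 0 := fun h => hT0 (Multiset.card_eq_zero.mp h)
    by_cases hK2 : K ≤ 2
    · -- small case
      have hS2 : ∀ x ∈ S, x ≤ 2 := fun x hx => le_trans (hSle x hx) hK2
      have hT2 : ∀ x ∈ T, x ≤ 2 := fun x hx => le_trans (hTle x hx) hK2
      have e2 := congrArg (padicValRat 2) hprod
      have e3 := congrArg (padicValRat 3) hprod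
      have e5 := congrArg (padicValRat 5) hprod
      rw [padicValRat_prod 2 S, padicValRat_prod 2 T,
        sum_map_three S _ hS2, sum_map_three T _ hT2] at e2
      rw [padicValRat_prod 3 S, padicValRat_prod 3 T,
        sum_map_three S _ hS2, sum_map_three T _ hT2] at e3
      rw [padicValRat_prod 5 S, padicValRat_prod 5 T,
        sum_map_three S _ hS2, sum_map_three T _ hT2] at e5
      simp only [genusFactor_zero, genusFactor_one, genusFactor_two,
        v2_5, v2_15, v2_135,
        v3_5, v3_15, v3_135,
        v5_5, v5_15, v5_135] at e2 e3 e5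
      have hc0 : S.count 0 = T.count 0 ∧ S.count 1 = T.count 1 ∧ S.count 2 = T.count 2 := by
        refine ⟨?_, ?_, ?_⟩ <;> omega
      ext x
      by_cases hx3 : x ≤ 2
      · have : x = 0 ∨ x = 1 ∨ x = 2 := by omega
        rcases this with rfl | rfl | rfl
        exacts [hc0.1, hc0.2.1, hc0.2.2]
      · rw [Multiset.count_eq_zero_of_notMem (fun h => hx3 (hS2 x h)),
          Multiset.count_eq_zero_of_notMem (fun h => hx3 (hT2 x h))]
    · -- big case
      push_neg at hK2
      have hm : Odd (2*K-1) := ⟨K-1, by omega⟩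
      obtain ⟨p, pp, hp2, hp3, hp5, hpdvd, hpnot⟩ := zsyg (2*K-1) hm (by omega)
      haveI : Fact p.Prime := ⟨pp⟩
      have hval : ∀ x, x ≤ K → x ≠ K → padicValRat p (genusFactor x) = 0 := by
        intro x hxle hxK
        match x with
        | 0 =>
          rw [genusFactor_zero]
          have h5 : ((5:ℕ) : ℚ) = (5 : ℚ) := by norm_num
          rw [← h5]
          exact pv_nat (not_dvd_of_prime_ne pp (by norm_num) hp5)
        | (j+1) =>
          have hlt : j + 1 < K := lt_of_le_of_ne hxle hxK
          rw [val_genusFactor_succ p hp2 hp3 hp5 j,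
            padicValNat.eq_zero_of_not_dvd (hpnot (2*j+1) (by omega))]
          norm_num
      have hKeq : K = (K-1)+1 := by omega
      have hvK : padicValRat p (genusFactor K) = (padicValNat p (2^(2*(K-1)+1)+1) : ℤ) := by
        rw [hKeq, val_genusFactor_succ p hp2 hp3 hp5]
        simp only [Nat.add_sub_cancel]
      have hdvd' : p ∣ 2^(2*(K-1)+1)+1 := by
        have h : 2*K-1 = 2*(K-1)+1 := by omega
        rwa [h] at hpdvd
      have hvKpos : 1 ≤ padicValNat p (2^(2*(K-1)+1)+1) :=
        one_le_padicValNat_of_dvd (by positivity) hdvd'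
      have e := congrArg (padicValRat p) hprod
      rw [padicValRat_prod p S, padicValRat_prod p T,
        sum_map_single S _ K (fun x hx hne => hval x (hSle x hx) hne),
        sum_map_single T _ K (fun x hx hne => hval x (hTle x hx) hne), hvK] at e
      have hcount : S.count K = T.count K := by
        have hne : (padicValNat p (2^(2*(K-1)+1)+1) : ℤ) ≠ 0 := by
          intro h; rw [Nat.cast_eq_zero] at h; omega
        exact_mod_cast mul_right_cancel₀ hne e
      have hKS : K ∈ S := by
        rcases Multiset.mem_add.mp hKmem with h | h
        · exact h
        · rw [← Multiset.count_pos] at h ⊢; omega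
      have hKT : K ∈ T := by
        rcases Multiset.mem_add.mp hKmem with h | h
        · rw [← Multiset.count_pos] at h ⊢; omega
        · exact h
      have hprod' : ((S.erase K).map genusFactor).prod = ((T.erase K).map genusFactor).prod := by
        apply mul_left_cancel₀ (genusFactor_ne_zero K)
        rw [Multiset.prod_map_erase hKS, Multiset.prod_map_erase hKT, hprod]
      have hcard' : (S.erase K).card + (T.erase K).card ≤ N := by
        rw [Multiset.card_erase_of_mem hKS, Multiset.card_erase_of_mem hKT,
          Nat.pred_eq_sub_one, Nat.pred_eq_sub_one]
        have h1 : 0 < S.card := Nat.pos_of_ne_zero hScard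
        have h2 : 0 < T.card := Nat.pos_of_ne_zero hTcard
        omega
      have heq := ih _ _ hcard' hprod'
      calc S = K ::ₘ S.erase K := (Multiset.cons_erase hKS).symm
      _ = K ::ₘ T.erase K := by rw [heq]
      _ = T := Multiset.cons_erase hKT

end GenusAux

/-- The map sending a finite multiset of natural numbers to the product of the
genus factors of its elements is injective. -/
theorem multiset_prod_genusFactor_injective :
    Function.Injective (fun S : Multiset ℕ => (S.map genusFactor).prod) := by
  intro S T h
  exact GenusAux.main (Multiset.card S + Multiset.card T) S T le_rfl h
end

section
/- For every natural number k ≥ 3 there exists a prime number p such that p divides 2^{2k−1} + 1 and, for every natural number l with 1 ≤ l < k, p does not divide 2^{2l−1} + 1. -/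
open Polynomial Finset

lemma sum_geom_not_sq_dvd {p : ℕ} (hp : p.Prime) (hodd : Odd p) {x : ℤ}
    (hx : (p:ℤ) ∣ x - 1) : ¬ ((p:ℤ)^2 ∣ ∑ i ∈ Finset.range p, x ^ i) := by
  intro hdvd
  have hx1 : (x : ZMod p) = 1 := by
    have h := (ZMod.intCast_zmod_eq_zero_iff_dvd (x-1) p).2 hx
    push_cast at h
    exact sub_eq_zero.mp h
  -- p divides the double sum T
  have hps : p ∣ ∑ i ∈ Finset.range p, i := by
    have h2 : (∑ i ∈ Finset.range p, i) * 2 = p * (p - 1) := Finset.sum_range_id_mul_two p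
    have hd : p ∣ (∑ i ∈ Finset.range p, i) * 2 := h2 ▸ Dvd.intro _ rfl
    have hc : p.Coprime 2 := by
      rcases hodd with ⟨c, hc⟩
      rcases Nat.coprime_or_dvd_of_prime hp 2 with h | h
      · exact h
      · exfalso; have := (Nat.prime_dvd_prime_iff_eq hp Nat.prime_two).mp h; omega
    exact hc.dvd_of_dvd_mul_right hd
  have hT : (p:ℤ) ∣ ∑ i ∈ Finset.range p, ∑ j ∈ Finset.range i, x ^ j := by
    rw [← ZMod.intCast_zmod_eq_zero_iff_dvd]
    push_cast
    simp only [hx1, one_pow, Finset.sum_const, Finset.card_range, nsmul_eq_mul, mul_one]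
    rw [← Nat.cast_sum]
    exact_mod_cast (ZMod.natCast_eq_zero_iff _ p).mpr hps
  -- S - p = (x-1) * T
  have hkey : (∑ i ∈ Finset.range p, x ^ i) - p =
      (x - 1) * ∑ i ∈ Finset.range p, ∑ j ∈ Finset.range i, x ^ j := by
    rw [Finset.mul_sum]
    have : ∀ i ∈ Finset.range p, (x - 1) * ∑ j ∈ Finset.range i, x ^ j = x ^ i - 1 := by
      intro i _
      rw [mul_comm, geom_sum_mul]
    rw [Finset.sum_congr rfl this, Finset.sum_sub_distrib]
    simp
  have hsq : (p:ℤ)^2 ∣ (∑ i ∈ Finset.range p, x ^ i) - p := by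
    rw [hkey, sq]
    exact mul_dvd_mul hx hT
  have hp2 : (p:ℤ)^2 ∣ (p:ℤ) := by
    have := dvd_sub hdvd hsq
    simpa using this
  have h2 : (p:ℤ)^2 ≤ p := Int.le_of_dvd (by exact_mod_cast hp.pos) hp2
  nlinarith [(show (2:ℤ) ≤ p by exact_mod_cast hp.two_le)]

lemma cyclotomic_natAbs_dvd {n : ℕ} (hn : 0 < n) :
    ((cyclotomic n ℤ).eval 2).natAbs ∣ 2 ^ n - 1 := by
  have h := Polynomial.eval_dvd (x := (2:ℤ)) (cyclotomic.dvd_X_pow_sub_one n ℤ)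
  simp only [eval_sub, eval_pow, eval_X, eval_one] at h
  have h' := Int.natAbs_dvd_natAbs.mpr h
  have hle : 1 ≤ 2 ^ n := Nat.one_le_pow _ _ (by norm_num)
  have h2 : ((2:ℤ)^n - 1).natAbs = 2 ^ n - 1 := by
    rw [show ((2:ℤ)^n - 1) = ((2^n - 1 : ℕ) : ℤ) by
      rw [Nat.cast_sub hle]; push_cast; ring, Int.natAbs_natCast]
  rwa [h2] at h'

lemma root_of_dvd {n p : ℕ} [Fact p.Prime]
    (hdvd : p ∣ ((cyclotomic n ℤ).eval 2).natAbs) :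
    IsRoot (cyclotomic n (ZMod p)) 2 := by
  have h0 : (((cyclotomic n ℤ).eval 2 : ℤ) : ZMod p) = 0 := by
    rw [ZMod.intCast_zmod_eq_zero_iff_dvd]
    exact Int.dvd_natAbs.mp (Int.natCast_dvd_natCast.mpr hdvd)
  have : IsRoot (cyclotomic n (ZMod p)) (((2:ℤ) : ZMod p)) := by
    rw [IsRoot.def, ← map_cyclotomic_int n (ZMod p), eval_map]
    show eval₂ (Int.castRingHom (ZMod p)) ((Int.castRingHom (ZMod p)) 2)
      (cyclotomic n ℤ) = 0
    rw [eval₂_hom]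
    simpa using h0
  simpa using this

lemma struct {n p : ℕ} (hn : 0 < n) (heven : 2 ∣ n) (hp : p.Prime)
    (hdvd : p ∣ ((cyclotomic n ℤ).eval 2).natAbs) (hpn : p ∣ n) :
    ∃ a u, n = p ^ a * u ∧ 1 ≤ a ∧ ¬ p ∣ u ∧ u ∣ p - 1 ∧ 2 ≤ u ∧
      orderOf (2 : ZMod p) = u := by
  haveI : Fact p.Prime := ⟨hp⟩
  have hp2 : p ≠ 2 := by
    intro rfl2
    have h1 := hdvd.trans (cyclotomic_natAbs_dvd hn)
    subst rfl2
    have h2 : 2 ∣ 2 ^ n := dvd_pow_self 2 hn.ne'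
    have h3 : 2 ≤ 2 ^ n := Nat.le_self_pow hn.ne' 2
    omega
  set a := n.factorization p with ha
  set u := n / p ^ a with hu
  have hnu : n = p ^ a * u := (Nat.ordProj_mul_ordCompl_eq_self n p).symm
  have hpu : ¬ p ∣ u := Nat.not_dvd_ordCompl hp hn.ne'
  have ha1 : 1 ≤ a := hp.factorization_pos_of_dvd hn.ne' hpn
  have hu0 : u ≠ 0 := by
    intro h; rw [h, mul_zero] at hnu; omega
  haveI : NeZero (u : ZMod p) := ⟨by
    rw [Ne, ZMod.natCast_eq_zero_iff]; exact hpu⟩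
  have hroot : IsRoot (cyclotomic n (ZMod p)) 2 := root_of_dvd hdvd
  rw [hnu] at hroot
  have hprim : IsPrimitiveRoot (2 : ZMod p) u :=
    (isRoot_cyclotomic_prime_pow_mul_iff_of_charP).mp hroot
  have hord : orderOf (2 : ZMod p) = u := hprim.eq_orderOf.symm
  have h20 : (2 : ZMod p) ≠ 0 := by
    have : ((2:ℕ) : ZMod p) ≠ 0 := by
      rw [Ne, ZMod.natCast_eq_zero_iff]
      intro h
      exact hp2 ((Nat.prime_dvd_prime_iff_eq hp Nat.prime_two).mp h)
    simpa using this
  have hup : u ∣ p - 1 := by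
    rw [← hord]
    exact ZMod.orderOf_dvd_card_sub_one h20
  have hcop : Nat.Coprime 2 (p ^ a) :=
    Nat.Coprime.pow_right a ((Nat.coprime_primes Nat.prime_two hp).mpr (Ne.symm hp2))
  have h2n : 2 ∣ p ^ a * u := by rw [← hnu]; exact heven
  have h2u : 2 ∣ u := (Nat.Coprime.dvd_of_dvd_mul_left hcop h2n)
  exact ⟨a, u, hnu, ha1, hpu, hup, Nat.le_of_dvd (Nat.pos_of_ne_zero hu0) h2u, hord⟩


lemma lin_bound : ∀ p : ℕ, 5 ≤ p → 3 * p + 1 ≤ 2 ^ p := by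
  intro p hp
  induction p with
  | zero => omega
  | succ q ih =>
    rcases Nat.lt_or_ge q 5 with h | h
    · interval_cases q <;> simp_all
    · have := ih (by omega)
      have h2 : 2 ^ (q+1) = 2 ^ q * 2 := pow_succ 2 q
      have : 4 ≤ 2 ^ q := by
        calc 4 = 2^2 := rfl
        _ ≤ 2 ^ q := Nat.pow_le_pow_right (by norm_num) (by omega)
      omega

lemma zsig_core {n : ℕ} (hn10 : 10 ≤ n) (hmod : n % 4 = 2) :
    ∃ p : ℕ, p.Prime ∧ p ∣ ((cyclotomic n ℤ).eval 2).natAbs ∧ ¬ p ∣ n := by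
  set N := ((cyclotomic n ℤ).eval 2).natAbs with hN
  have hn0 : 0 < n := by omega
  have heven : 2 ∣ n := by omega
  have hN1 : 1 < N := by
    have h := sub_one_lt_natAbs_cyclotomic_eval (n := n) (q := 2) (by omega) (by norm_num)
    simpa using h
  by_contra hcon
  have hall : ∀ q : ℕ, q.Prime → q ∣ N → q ∣ n := by
    intro q hq hqN
    by_contra h
    exact hcon ⟨q, hq, hqN, h⟩
  clear hcon
  set p := N.minFac with hpdef
  have hp : p.Prime := Nat.minFac_prime (by omega)
  have hpN : p ∣ N := Nat.minFac_dvd N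
  have hpn : p ∣ n := hall p hp hpN
  obtain ⟨a, u, hnu, ha1, hpu, hup, hu2, hord⟩ := struct hn0 heven hp hpN hpn
  obtain ⟨a1, rfl⟩ : ∃ a1, a = a1 + 1 := ⟨a - 1, by omega⟩
  have hupe : u ≤ p - 1 := Nat.le_of_dvd (by have := hp.two_le; omega) hup
  have hp3 : 3 ≤ p := by omega
  have hpodd : Odd p := hp.odd_of_ne_two (by omega)
  -- every prime dividing N equals p
  have hunique : ∀ {q : ℕ}, q.Prime → q ∣ N → q = p := by
    intro q hq hqN
    by_contra hne
    obtain ⟨b, v, hnv, hb1, hqv, hvq, hv2, _⟩ := struct hn0 heven hq hqN (hall q hq hqN)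
    have hvqe : v ≤ q - 1 := Nat.le_of_dvd (by have := hq.two_le; omega) hvq
    have hq3 : 3 ≤ q := by omega
    -- p ∣ n = q^b * v, p ≠ q so p ∣ v
    have hpv : p ∣ v := by
      have h1 := hpn
      rw [hnv] at h1
      rcases (Nat.Prime.dvd_mul hp).mp h1 with h | h
      · exact (hne ((Nat.prime_dvd_prime_iff_eq hp hq).mp (hp.dvd_of_dvd_pow h)).symm).elim
      · exact h
    have hqu : q ∣ u := by
      have h1 := hall q hq hqN
      rw [hnu] at h1
      rcases (Nat.Prime.dvd_mul hq).mp h1 with h | h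
      · exact (hne ((Nat.prime_dvd_prime_iff_eq hq hp).mp (hq.dvd_of_dvd_pow h))).elim
      · exact h
    have h1 : p ≤ v := Nat.le_of_dvd (by omega) hpv
    have h2 : q ≤ u := Nat.le_of_dvd (by omega) hqu
    omega
  -- p^2 does not divide N
  have hsqfree : ¬ p ^ 2 ∣ N := by
    intro hsq
    set d := n / p with hd
    have hdn : n = d * p := by
      rw [hd, Nat.div_mul_cancel hpn]
    have hud : u ∣ d := by
      refine ⟨p ^ a1, ?_⟩
      have h3 : d * p = u * p ^ a1 * p := by
        rw [← hdn, hnu, pow_succ]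
        ring
      exact Nat.eq_of_mul_eq_mul_right hp.pos h3
    have hd1 : 1 ≤ d := by
      rcases Nat.eq_zero_or_pos d with h | h
      · rw [h] at hdn; omega
      · omega
    -- p ∣ 2^d - 1 over ℤ
    have hx : (p:ℤ) ∣ (2:ℤ)^d - 1 := by
      have hpow : (2 : ZMod p)^d = 1 := by
        rw [← orderOf_dvd_iff_pow_eq_one, hord]
        exact hud
      have : (((2:ℤ)^d - 1 : ℤ) : ZMod p) = 0 := by
        push_cast
        rw [hpow]
        ring
      exact (ZMod.intCast_zmod_eq_zero_iff_dvd _ p).mp this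
    -- N divides the geometric sum
    have hdp : d ∈ n.properDivisors := by
      rw [Nat.mem_properDivisors]
      constructor
      · exact ⟨p, hdn⟩
      · have := hp.two_le
        calc d < d * 2 := by omega
        _ ≤ d * p := by exact Nat.mul_le_mul_left d this
        _ = n := hdn.symm
    have hdvd1 := Polynomial.eval_dvd (x := (2:ℤ))
      (X_pow_sub_one_mul_cyclotomic_dvd_X_pow_sub_one_of_dvd ℤ hdp)
    simp only [eval_mul, eval_sub, eval_pow, eval_X, eval_one] at hdvd1
    -- 2^n - 1 = (∑ i in range p, (2^d)^i) * (2^d - 1)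
    have hgeom : (2:ℤ)^n - 1 = (∑ i ∈ Finset.range p, ((2:ℤ)^d)^i) * ((2:ℤ)^d - 1) := by
      rw [geom_sum_mul, ← pow_mul, ← hdn]
    have hcancel : (cyclotomic n ℤ).eval 2 ∣ ∑ i ∈ Finset.range p, ((2:ℤ)^d)^i := by
      rw [hgeom] at hdvd1
      have hne : ((2:ℤ)^d - 1) ≠ 0 := by
        have : (2:ℤ)^d ≥ 2^1 := pow_le_pow_right₀ (by norm_num) hd1
        norm_num at this ⊢
        omega
      rcases hdvd1 with ⟨c, hc⟩
      refine ⟨c, ?_⟩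
      have : ((2:ℤ)^d - 1) * (∑ i ∈ Finset.range p, ((2:ℤ)^d)^i) =
          ((2:ℤ)^d - 1) * ((cyclotomic n ℤ).eval 2 * c) := by
        rw [← mul_assoc]
        rw [mul_comm (∑ i ∈ Finset.range p, ((2:ℤ)^d)^i) ((2:ℤ)^d - 1)] at hc
        linarith [hc]
      exact mul_left_cancel₀ hne this
    have hp2S : (p:ℤ)^2 ∣ ∑ i ∈ Finset.range p, ((2:ℤ)^d)^i := by
      have h1 : ((p:ℤ))^2 ∣ ((cyclotomic n ℤ).eval 2) := by
        have : ((p^2 : ℕ) : ℤ) ∣ ((N : ℕ) : ℤ) := Int.natCast_dvd_natCast.mpr hsq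
        have h2 : ((N : ℕ) : ℤ) ∣ (cyclotomic n ℤ).eval 2 := Int.natAbs_dvd.mpr dvd_rfl
        push_cast at this
        exact this.trans h2
      exact h1.trans hcancel
    exact sum_geom_not_sq_dvd hp hpodd hx hp2S
  -- N = p
  have hNp : N = p := by
    have hfact := Nat.eq_prime_pow_of_unique_prime_dvd (p := p) (by omega : N ≠ 0)
      (fun {d} hd hdN => hunique hd hdN)
    set e := N.primeFactorsList.length with he
    rcases Nat.lt_or_ge e 2 with h | h
    · interval_cases e
      · rw [hfact]; simp at hfact ⊢; omega
      · rw [hfact]; ring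
    · exfalso
      apply hsqfree
      rw [hfact]
      exact pow_dvd_pow p h
  -- size contradiction
  have hu0 : 0 < u := by omega
  have hX : p ≤ 2 ^ (p - 1) := by
    have := Nat.lt_two_pow_self (n := p - 1)
    omega
  have h2p : 2 ^ p = 2 * 2 ^ (p - 1) := by
    conv_lhs => rw [show p = 1 + (p - 1) by omega]
    rw [pow_add, pow_one]
  have hp1 : 1 < 2 ^ p := by
    have : 2 ^ 1 ≤ 2 ^ p := Nat.pow_le_pow_right (by norm_num) hp.pos
    omega
  rcases Nat.eq_zero_or_pos a1 with ha0 | ha0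
  · -- a = 1, n = p * u
    subst ha0
    have hnpu : n = p * u := by simpa using hnu
    have hexp := cyclotomic_expand_eq_cyclotomic_mul hp hpu ℤ
    have heval := congrArg (Polynomial.eval (2:ℤ)) hexp
    rw [expand_eval, eval_mul, show u * p = n by rw [hnpu]; ring] at heval
    have hnatAbs : ((cyclotomic u ℤ).eval ((2:ℤ)^p)).natAbs =
        N * ((cyclotomic u ℤ).eval 2).natAbs := by
      rw [heval, Int.natAbs_mul, hN]
    set B := ((cyclotomic u ℤ).eval 2).natAbs with hB
    set A := ((cyclotomic u ℤ).eval ((2:ℤ)^p)).natAbs with hA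
    have hAbound : (2 ^ p - 1) ^ u.totient < A := by
      have h := sub_one_pow_totient_lt_natAbs_cyclotomic_eval (n := u) (q := 2 ^ p)
        (by omega) (by omega)
      have hc : (((2:ℕ) ^ p : ℕ) : ℤ) = (2:ℤ)^p := by push_cast; ring
      rwa [hc] at h
    have hBb : B ∣ 2 ^ u - 1 := cyclotomic_natAbs_dvd hu0
    have hBle : B ≤ 2 ^ u - 1 := Nat.le_of_dvd (by
      have : 4 ≤ 2 ^ u := by
        calc (4:ℕ) = 2 ^ 2 := rfl
        _ ≤ 2 ^ u := Nat.pow_le_pow_right (by norm_num) hu2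
      omega) hBb
    have hApB : A = p * B := by rw [hnatAbs, hNp]
    rcases Nat.eq_or_lt_of_le hu2 with hu2' | hu3
    · -- u = 2
      have hu2'' : u = 2 := hu2'.symm
      subst hu2''
      have hp5 : 5 ≤ p := by
        have : n = p * 2 := by omega
        omega
      have htot : Nat.totient 2 = 1 := Nat.totient_two
      rw [htot, pow_one] at hAbound
      have hB3 : B ≤ 3 := by norm_num at hBle; omega
      have := lin_bound p hp5
      have h2ple : 2 ^ p - 1 < p * B := by omega
      have hpB : p * B ≤ p * 3 := Nat.mul_le_mul_left p hB3
      have : p * 3 = 3 * p := by ring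
      omega
    · -- u ≥ 3
      have htot : 2 ≤ u.totient := by
        have h1 : u.totient ≠ 1 := by
          intro h
          rcases Nat.totient_eq_one_iff.mp h with h' | h' <;> omega
        have h2 : 0 < u.totient := Nat.totient_pos.mpr hu0
        omega
      have hge : (2 ^ p - 1) ^ 2 ≤ (2 ^ p - 1) ^ u.totient :=
        Nat.pow_le_pow_right (by omega) htot
      have h2u : 2 ^ u ≤ 2 ^ (p - 1) := Nat.pow_le_pow_right (by norm_num) (by omega)
      have hchain : A < A := by
        calc A = p * B := hApB
        _ ≤ p * (2 ^ u - 1) := Nat.mul_le_mul_left p hBle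
        _ < p * 2 ^ u := by
            have h0 : 0 < 2 ^ u := Nat.pow_pos (by norm_num)
            exact Nat.mul_lt_mul_of_pos_left (by omega) hp.pos
        _ ≤ p * 2 ^ (p - 1) := Nat.mul_le_mul_left p h2u
        _ ≤ 2 ^ (p - 1) * 2 ^ (p - 1) := Nat.mul_le_mul_right _ hX
        _ ≤ (2 ^ p - 1) * (2 ^ p - 1) := Nat.mul_le_mul (by omega) (by omega)
        _ = (2 ^ p - 1) ^ 2 := (sq _).symm
        _ ≤ (2 ^ p - 1) ^ u.totient := hge
        _ < A := hAbound
      exact absurd hchain (lt_irrefl A)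
  · -- a ≥ 2 : p divides n / p
    set s := p ^ a1 * u with hs
    have hsp : p ∣ s := by
      rw [hs]
      exact Dvd.dvd.mul_right (dvd_pow_self p (by omega)) u
    have hns : s * p = n := by rw [hnu, hs, pow_succ]; ring
    have hexp := cyclotomic_expand_eq_cyclotomic hp hsp ℤ
    have heval := congrArg (Polynomial.eval (2:ℤ)) hexp
    rw [expand_eval, hns] at heval
    have hs1 : 1 < s := by
      have h3 : 3 ≤ p ^ a1 := by
        calc (3:ℕ) = 3 ^ 1 := rfl
        _ ≤ 3 ^ a1 := Nat.pow_le_pow_right (by norm_num) (by omega)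
        _ ≤ p ^ a1 := Nat.pow_le_pow_left hp3 a1
      calc 1 < 3 * 2 := by norm_num
      _ ≤ p ^ a1 * u := Nat.mul_le_mul h3 hu2
      _ = s := hs.symm
    have hAbound : (2 ^ p - 1) ^ s.totient < N := by
      have h := sub_one_pow_totient_lt_natAbs_cyclotomic_eval (n := s) (q := 2 ^ p)
        hs1 (by omega)
      have hc : (((2:ℕ) ^ p : ℕ) : ℤ) = (2:ℤ)^p := by push_cast; ring
      rw [hc, heval] at h
      exact h
    rw [hNp] at hAbound
    have hge : 2 ^ p - 1 ≤ (2 ^ p - 1) ^ s.totient :=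
      Nat.le_self_pow (Nat.totient_pos.mpr (by omega)).ne' _
    omega

/-- For every `k ≥ 3` there is a prime dividing `2^(2k-1) + 1` which does not
divide `2^(2l-1) + 1` for any `1 ≤ l < k`. -/
theorem exists_prime_dvd_two_pow_add_one (k : ℕ) (hk : 3 ≤ k) :
    ∃ p : ℕ, p.Prime ∧ p ∣ 2 ^ (2 * k - 1) + 1 ∧
      ∀ l : ℕ, 1 ≤ l → l < k → ¬ p ∣ 2 ^ (2 * l - 1) + 1 := by
  set m := 2 * k - 1 with hm
  have hm5 : 5 ≤ m := by omega
  set n := 2 * m with hn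
  have hn10 : 10 ≤ n := by omega
  have hmod : n % 4 = 2 := by omega
  obtain ⟨p, hp, hpN, hpn⟩ := zsig_core hn10 hmod
  haveI : Fact p.Prime := ⟨hp⟩
  haveI : NeZero ((n : ℕ) : ZMod p) :=
    ⟨by rw [Ne, ZMod.natCast_eq_zero_iff]; exact hpn⟩
  have hroot : Polynomial.IsRoot (Polynomial.cyclotomic n (ZMod p)) 2 := root_of_dvd hpN
  have hprim : IsPrimitiveRoot (2 : ZMod p) n := Polynomial.isRoot_cyclotomic_iff.mp hroot
  have hord : orderOf (2 : ZMod p) = n := hprim.eq_orderOf.symm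
  have hpowm : (2 : ZMod p) ^ m = -1 := by
    have h1 : (2 : ZMod p) ^ n = 1 := by
      rw [← orderOf_dvd_iff_pow_eq_one, hord]
    have h2 : ((2 : ZMod p) ^ m - 1) * ((2 : ZMod p) ^ m + 1) = 0 := by
      have h3 : (2 : ZMod p) ^ n = ((2 : ZMod p) ^ m) ^ 2 := by
        rw [← pow_mul]
        congr 1
        omega
      rw [h3] at h1
      ring_nf
      ring_nf at h1
      rw [h1]
      ring
    rcases mul_eq_zero.mp h2 with h | h
    · exfalso
      have h4 : (2 : ZMod p) ^ m = 1 := by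
        have := sub_eq_zero.mp h
        exact this
      have h5 : orderOf (2 : ZMod p) ∣ m := orderOf_dvd_iff_pow_eq_one.mpr h4
      rw [hord] at h5
      have := Nat.le_of_dvd (by omega) h5
      omega
    · linear_combination h
  refine ⟨p, hp, ?_, ?_⟩
  · -- p ∣ 2^m + 1
    rw [← ZMod.natCast_eq_zero_iff]
    push_cast
    rw [hpowm]
    ring
  · intro l hl1 hlk hdvd
    have h0 : ((2 ^ (2 * l - 1) + 1 : ℕ) : ZMod p) = 0 :=
      (ZMod.natCast_eq_zero_iff _ p).mpr hdvd
    push_cast at h0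
    have h1 : (2 : ZMod p) ^ (2 * l - 1) = -1 := by linear_combination h0
    have h2 : (2 : ZMod p) ^ ((2 * l - 1) * 2) = 1 := by
      rw [pow_mul, h1]
      ring
    have h3 : orderOf (2 : ZMod p) ∣ (2 * l - 1) * 2 := orderOf_dvd_iff_pow_eq_one.mpr h2
    rw [hord] at h3
    have h4 := Nat.le_of_dvd (by omega) h3
    omega
end

section
/- Let M be the 3×3 matrix over ℚ given by M = [[3, 0, 3], [0, 6, 0], [3/2, 0, 9/2]]. For every natural number k ≥ 1, the (0,0) entry of M^k equals (3/2)^{k−1}·(2^{2k−1}+1). -/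
lemma handle_aux (k : ℕ) :
    ((!![3, 0, 3; 0, 6, 0; 3/2, 0, 9/2] : Matrix (Fin 3) (Fin 3) ℚ) ^ k) 0 0 =
      (6:ℚ)^k/3 + 2/3 * (3/2:ℚ)^k ∧
    ((!![3, 0, 3; 0, 6, 0; 3/2, 0, 9/2] : Matrix (Fin 3) (Fin 3) ℚ) ^ k) 0 2 =
      2/3 * (6:ℚ)^k - 2/3 * (3/2:ℚ)^k ∧
    ((!![3, 0, 3; 0, 6, 0; 3/2, 0, 9/2] : Matrix (Fin 3) (Fin 3) ℚ) ^ k) 2 0 =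
      (6:ℚ)^k/3 - 1/3 * (3/2:ℚ)^k ∧
    ((!![3, 0, 3; 0, 6, 0; 3/2, 0, 9/2] : Matrix (Fin 3) (Fin 3) ℚ) ^ k) 2 2 =
      2/3 * (6:ℚ)^k + 1/3 * (3/2:ℚ)^k := by
  induction k with
  | zero =>
    norm_num [Matrix.one_apply]
    decide
  | succ n ih =>
    obtain ⟨h1, h2, h3, h4⟩ := ih
    rw [pow_succ]
    have e00 : (!![3, 0, 3; 0, 6, 0; 3/2, 0, 9/2] : Matrix (Fin 3) (Fin 3) ℚ) 0 0 = 3 := rfl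
    have e02 : (!![3, 0, 3; 0, 6, 0; 3/2, 0, 9/2] : Matrix (Fin 3) (Fin 3) ℚ) 0 2 = 3 := rfl
    have e10 : (!![3, 0, 3; 0, 6, 0; 3/2, 0, 9/2] : Matrix (Fin 3) (Fin 3) ℚ) 1 0 = 0 := rfl
    have e12 : (!![3, 0, 3; 0, 6, 0; 3/2, 0, 9/2] : Matrix (Fin 3) (Fin 3) ℚ) 1 2 = 0 := rfl
    have e20 : (!![3, 0, 3; 0, 6, 0; 3/2, 0, 9/2] : Matrix (Fin 3) (Fin 3) ℚ) 2 0 = 3/2 := rfl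
    have e22 : (!![3, 0, 3; 0, 6, 0; 3/2, 0, 9/2] : Matrix (Fin 3) (Fin 3) ℚ) 2 2 = 9/2 := rfl
    simp only [Matrix.mul_apply, Fin.sum_univ_three, h1, h2, h3, h4,
      e00, e02, e10, e12, e20, e22]
    refine ⟨?_, ?_, ?_, ?_⟩ <;> ring

/-- The `(0,0)` entry of the `k`-th power of the handle matrix
`[[3,0,3],[0,6,0],[3/2,0,9/2]]` equals `(3/2)^(k-1) * (2^(2k-1) + 1)`,
for `k ≥ 1`. -/
theorem handle_matrix_pow_entry (k : ℕ) (hk : 1 ≤ k) :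
    ((!![3, 0, 3; 0, 6, 0; 3/2, 0, 9/2] : Matrix (Fin 3) (Fin 3) ℚ) ^ k) 0 0 =
      (3 / 2 : ℚ) ^ (k - 1) * (2 ^ (2 * k - 1) + 1) := by
  obtain ⟨n, rfl⟩ := Nat.exists_eq_add_of_le hk
  have h := (handle_aux (1 + n)).1
  rw [h]
  have e1 : 1 + n - 1 = n := by omega
  have e2 : 2 * (1 + n) - 1 = 2 * n + 1 := by omega
  rw [e1, e2]
  have key : (3/2:ℚ)^n * 2^(2*n+1) = 2 * 6^n := by
    have h6 : (6:ℚ)^n = (3/2)^n * 4^n := by rw [← mul_pow]; norm_num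
    rw [pow_succ, pow_mul, show ((2:ℚ)^2) = 4 by norm_num, h6]
    ring
  have : (3/2:ℚ)^n * (2^(2*n+1) + 1) = 2 * 6^n + (3/2)^n := by
    rw [mul_add, key, mul_one]
  rw [this, pow_add, pow_add]
  ring
end

section
/- In the group algebra ℚ[S₃], let c₂ denote the sum of the three transpositions and c₃ denote the sum of the two 3-cycles, and define the linear handle operator h on ℚ[S₃] by h(x) = x + (1/3)·c₂·x·c₂ + (1/2)·c₃·x·c₃. For every natural number k ≥ 1, the coefficient of the identity permutation in h^k(1) (the k-fold iterate of h applied to the identity element 1) equals (3/2)^{k−1}·(2^{2k−1}+1). -/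
open MonoidAlgebra

/-- The sum of the three transpositions in `ℚ[S₃]`. -/
noncomputable def c₂ : MonoidAlgebra ℚ (Equiv.Perm (Fin 3)) :=
  of ℚ (Equiv.Perm (Fin 3)) (Equiv.swap 0 1) +
  of ℚ (Equiv.Perm (Fin 3)) (Equiv.swap 0 2) +
  of ℚ (Equiv.Perm (Fin 3)) (Equiv.swap 1 2)

/-- The sum of the two 3-cycles in `ℚ[S₃]`. -/
noncomputable def c₃ : MonoidAlgebra ℚ (Equiv.Perm (Fin 3)) :=
  of ℚ (Equiv.Perm (Fin 3)) (Equiv.swap 0 1 * Equiv.swap 1 2) +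
  of ℚ (Equiv.Perm (Fin 3)) (Equiv.swap 1 2 * Equiv.swap 0 1)

/-- The handle operator `x ↦ x + (1/3)·c₂·x·c₂ + (1/2)·c₃·x·c₃` on `ℚ[S₃]`. -/
noncomputable def handle (x : MonoidAlgebra ℚ (Equiv.Perm (Fin 3))) :
    MonoidAlgebra ℚ (Equiv.Perm (Fin 3)) :=
  x + (1 / 3 : ℚ) • (c₂ * x * c₂) + (1 / 2 : ℚ) • (c₃ * x * c₃)

section facts
open Equiv
abbrev P := Perm (Fin 3)
lemma f1 : (swap 0 1 : P) * swap 0 1 = 1 := by decide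
lemma f2 : (swap 0 1 : P) * swap 0 2 = swap 1 2 * swap 0 1 := by decide
lemma f3 : (swap 0 1 : P) * swap 1 2 = swap 0 1 * swap 1 2 := rfl
lemma f4 : (swap 0 2 : P) * swap 0 1 = swap 0 1 * swap 1 2 := by decide
lemma f5 : (swap 0 2 : P) * swap 0 2 = 1 := by decide
lemma f6 : (swap 0 2 : P) * swap 1 2 = swap 1 2 * swap 0 1 := by decide
lemma f7 : (swap 1 2 : P) * swap 0 1 = swap 1 2 * swap 0 1 := rfl
lemma f8 : (swap 1 2 : P) * swap 0 2 = swap 0 1 * swap 1 2 := by decide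
lemma f9 : (swap 1 2 : P) * swap 1 2 = 1 := by decide
lemma g1 : (swap 0 1 : P) * (swap 0 1 * swap 1 2) = swap 1 2 := by decide
lemma g2 : (swap 0 1 : P) * (swap 1 2 * swap 0 1) = swap 0 2 := by decide
lemma g3 : (swap 0 2 : P) * (swap 0 1 * swap 1 2) = swap 0 1 := by decide
lemma g4 : (swap 0 2 : P) * (swap 1 2 * swap 0 1) = swap 1 2 := by decide
lemma g5 : (swap 1 2 : P) * (swap 0 1 * swap 1 2) = swap 0 2 := by decide
lemma g6 : (swap 1 2 : P) * (swap 1 2 * swap 0 1) = swap 0 1 := by decide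
lemma h1 : ((swap 0 1 : P) * swap 1 2) * swap 0 1 = swap 0 2 := by decide
lemma h2 : ((swap 0 1 : P) * swap 1 2) * swap 0 2 = swap 1 2 := by decide
lemma h3 : ((swap 0 1 : P) * swap 1 2) * swap 1 2 = swap 0 1 := by decide
lemma h4 : ((swap 1 2 : P) * swap 0 1) * swap 0 1 = swap 1 2 := by decide
lemma h5 : ((swap 1 2 : P) * swap 0 1) * swap 0 2 = swap 0 1 := by decide
lemma h6 : ((swap 1 2 : P) * swap 0 1) * swap 1 2 = swap 0 2 := by decide
lemma k1 : ((swap 0 1 : P) * swap 1 2) * (swap 0 1 * swap 1 2) = swap 1 2 * swap 0 1 := by decide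
lemma k2 : ((swap 0 1 : P) * swap 1 2) * (swap 1 2 * swap 0 1) = 1 := by decide
lemma k3 : ((swap 1 2 : P) * swap 0 1) * (swap 0 1 * swap 1 2) = 1 := by decide
lemma k4 : ((swap 1 2 : P) * swap 0 1) * (swap 1 2 * swap 0 1) = swap 0 1 * swap 1 2 := by decide
end facts

lemma hc22 : c₂ * c₂ = (3:ℚ) • 1 + (3:ℚ) • c₃ := by
  simp only [c₂, c₃, mul_add, add_mul, ← map_mul, f1, f2, f3, f4, f5, f6, f7, f8, f9, map_one]
  module

lemma hc33 : c₃ * c₃ = (2:ℚ) • 1 + c₃ := by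
  simp only [c₂, c₃, mul_add, add_mul, ← map_mul, k1, k2, k3, k4, map_one]
  module

lemma hc23 : c₂ * c₃ = (2:ℚ) • c₂ := by
  simp only [c₂, c₃, mul_add, add_mul, ← map_mul, g1, g2, g3, g4, g5, g6]
  module

lemma hc32 : c₃ * c₂ = (2:ℚ) • c₂ := by
  simp only [c₂, c₃, mul_add, add_mul, ← map_mul, h1, h2, h3, h4, h5, h6]
  module


lemma handle_one : handle 1 = (3:ℚ) • 1 + (3/2:ℚ) • c₃ := by
  simp only [handle, mul_one, hc22, hc33]
  module

lemma handle_c₃ : handle c₃ = (3:ℚ) • 1 + (9/2:ℚ) • c₃ := by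
  have h1 : c₂ * c₃ * c₂ = (6:ℚ) • 1 + (6:ℚ) • c₃ := by
    rw [hc23, smul_mul_assoc, hc22]; module
  have h2 : c₃ * c₃ * c₃ = (2:ℚ) • 1 + (3:ℚ) • c₃ := by
    rw [hc33, add_mul, smul_mul_assoc, one_mul, hc33]; module
  rw [handle, h1, h2]; module

lemma handle_lin (a b : ℚ) (x y : MonoidAlgebra ℚ (Equiv.Perm (Fin 3))) :
    handle (a • x + b • y) = a • handle x + b • handle y := by
  simp only [handle, mul_add, add_mul, mul_smul_comm, smul_mul_assoc]
  module

noncomputable def A (n : ℕ) : ℚ := (6^n + 2*(3/2)^n)/3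
noncomputable def B (n : ℕ) : ℚ := (6^n - (3/2)^n)/3

lemma iter (n : ℕ) : handle^[n] (1 : MonoidAlgebra ℚ (Equiv.Perm (Fin 3))) = A n • 1 + B n • c₃ := by
  induction n with
  | zero => norm_num [A, B]
  | succ n ih =>
    rw [Function.iterate_succ_apply', ih, handle_lin, handle_one, handle_c₃]
    have ha : A (n+1) = 3 * A n + 3 * B n := by simp only [A, B]; ring
    have hb : B (n+1) = (3/2) * A n + (9/2) * B n := by simp only [A, B]; ring
    rw [ha, hb]; module

lemma c₃_coeff_one : c₃.coeff (1 : Equiv.Perm (Fin 3)) = 0 := by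
  have h1 : (Equiv.swap 0 1 * Equiv.swap 1 2 : Equiv.Perm (Fin 3)) ≠ 1 := by decide
  have h2 : (Equiv.swap 1 2 * Equiv.swap 0 1 : Equiv.Perm (Fin 3)) ≠ 1 := by decide
  simp only [c₃, MonoidAlgebra.of_apply]
  erw [MonoidAlgebra.coeff_add, Finsupp.add_apply, MonoidAlgebra.coeff_single, MonoidAlgebra.coeff_single, Finsupp.single_apply, Finsupp.single_apply]
  simp [h1, h2]

/-- For `k ≥ 1`, the coefficient of the identity permutation in `h^k(1)` equals
`(3/2)^(k-1) * (2^(2k-1) + 1)`. -/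
theorem handle_iterate_coeff_one (k : ℕ) (hk : 1 ≤ k) :
    (handle^[k] (1 : MonoidAlgebra ℚ (Equiv.Perm (Fin 3)))).coeff
        (1 : Equiv.Perm (Fin 3)) =
      (3 / 2 : ℚ) ^ (k - 1) * (2 ^ (2 * k - 1) + 1) := by
  obtain ⟨m, rfl⟩ := Nat.exists_eq_add_of_le hk
  rw [iter]
  have hone : (1 : MonoidAlgebra ℚ (Equiv.Perm (Fin 3))).coeff (1 : Equiv.Perm (Fin 3)) = 1 := by
    simp [MonoidAlgebra.one_def]
  rw [MonoidAlgebra.coeff_add, Finsupp.add_apply, MonoidAlgebra.coeff_smul, MonoidAlgebra.coeff_smul, Finsupp.smul_apply, Finsupp.smul_apply, hone, c₃_coeff_one]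
  have h1 : 1 + m - 1 = m := by omega
  have h2 : 2 * (1 + m) - 1 = 2 * m + 1 := by omega
  rw [h1, h2, A]
  have h3 : (2:ℚ) ^ (2*m+1) = 2 * 4 ^ m := by rw [pow_succ, pow_mul]; ring
  have h4 : (3/2:ℚ)^m * 4^m = 6^m := by rw [← mul_pow]; norm_num
  rw [h3, pow_add, pow_add]
  simp only [smul_eq_mul, mul_one, smul_zero, add_zero]
  linear_combination (-2:ℚ) * h4
end
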